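/- arXiv:1412.7408 — 5 statements merged into one kernel-verified Lean document; each statement's English description precedes it below -/
import Mathlib

section
/- Fix m ≥ 0 and let Φ_m(t,u) = ∑_{d=1}^∞ P_{m,d}(t) u^d, a formal power series in u with coefficients in ℤ[t], where P_{m,d}(t) is the Kazhdan–Lusztig polynomial of the uniform matroid of rank d on m+d elements. Then, as formal power series in u over the field ℚ(t) of rational functions, Φ_m(t^{-1}, tu) = (tu−u) / ((1−tu+u)(1+u)^m) + (1−tu+u)^{−(m+1)} · Φ_m(t, u/(1−tu+u)). -/
open scoped Classical

/-- A matroid on a finite ground set, presented by its rank function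
(normalized, monotone, submodular, with unit increase). -/
structure FinMatroid where
  E : Type
  fintypeE : Fintype E
  deceqE : DecidableEq E
  rk : Finset E → ℕ
  rk_empty : rk ∅ = 0
  rk_mono : ∀ ⦃S T : Finset E⦄, S ⊆ T → rk S ≤ rk T
  rk_submod : ∀ S T : Finset E, rk (S ∪ T) + rk (S ∩ T) ≤ rk S + rk T
  rk_insert_le : ∀ (S : Finset E) (x : E), rk (insert x S) ≤ rk S + 1

attribute [instance] FinMatroid.fintypeE FinMatroid.deceqE

namespace FinMatroid

/-- The rank of the matroid: the rank of the full ground set. -/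
noncomputable def rank (M : FinMatroid) : ℕ := M.rk Finset.univ

/-- A flat: a set such that adding any new element increases the rank. -/
def IsFlat (M : FinMatroid) (F : Finset M.E) : Prop :=
  ∀ x ∉ F, M.rk (insert x F) ≠ M.rk F

/-- The (finite) collection of flats of `M`. -/
noncomputable def flats (M : FinMatroid) : Finset (Finset M.E) :=
  Finset.univ.filter M.IsFlat

/-- A matroid is loopless if every singleton has rank 1. -/
def Loopless (M : FinMatroid) : Prop := ∀ x : M.E, M.rk {x} = 1

/-- The Möbius function of the lattice of flats of `M` (extended by the usual
recursion; `mu A B = 0` unless `A ⊆ B`). -/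
noncomputable def mu (M : FinMatroid) (A B : Finset M.E) : ℤ :=
  if A = B then 1
  else -∑ G ∈ (M.flats.filter (fun G => A ⊆ G ∧ G ⊂ B)).attach,
        M.mu A G.1
termination_by B.card
decreasing_by
  exact Finset.card_lt_card (Finset.mem_filter.mp G.2).2.2

/-- The characteristic polynomial `χ_M(t) = ∑_{F flat} μ(∅,F) t^(rk M - rk F)`. -/
noncomputable def charPoly (M : FinMatroid) : Polynomial ℤ :=
  ∑ F ∈ M.flats, Polynomial.C (M.mu ∅ F) * Polynomial.X ^ (M.rank - M.rk F)

/-- The localization `M_F`: the restriction of `M` to the set `F`. -/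
noncomputable def localization (M : FinMatroid) (F : Finset M.E) : FinMatroid where
  E := {x : M.E // x ∈ F}
  fintypeE := inferInstance
  deceqE := inferInstance
  rk S := M.rk (S.map (Function.Embedding.subtype _))
  rk_empty := by simpa using M.rk_empty
  rk_mono := fun S T h => M.rk_mono (Finset.map_subset_map.mpr h)
  rk_submod := fun S T => by
    try dsimp only
    rw [Finset.map_union, Finset.map_inter]
    exact M.rk_submod _ _
  rk_insert_le := fun S x => by
    try dsimp only
    rw [Finset.map_insert]
    exact M.rk_insert_le _ _

/-- The restriction `M^F` (the contraction of `M` by the flat `F`), a matroid on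
the complement of `F`. -/
noncomputable def restrictionAt (M : FinMatroid) (F : Finset M.E) : FinMatroid where
  E := {x : M.E // x ∉ F}
  fintypeE := inferInstance
  deceqE := inferInstance
  rk S := M.rk (S.map (Function.Embedding.subtype _) ∪ F) - M.rk F
  rk_empty := by simp
  rk_mono := fun S T h =>
    Nat.sub_le_sub_right
      (M.rk_mono (Finset.union_subset_union_left (Finset.map_subset_map.mpr h))) _
  rk_submod := fun S T => by
    try dsimp only
    set e := Function.Embedding.subtype (fun x : M.E => x ∉ F) with he
    have h1 : (S ∪ T).map e ∪ F = (S.map e ∪ F) ∪ (T.map e ∪ F) := by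
      rw [Finset.map_union, Finset.union_union_distrib_right]
    have h2 : (S ∩ T).map e ∪ F = (S.map e ∪ F) ∩ (T.map e ∪ F) := by
      rw [Finset.map_inter, Finset.inter_union_distrib_right]
    have h3 := M.rk_submod (S.map e ∪ F) (T.map e ∪ F)
    have h4 : M.rk F ≤ M.rk (S.map e ∪ F) := M.rk_mono Finset.subset_union_right
    have h5 : M.rk F ≤ M.rk (T.map e ∪ F) := M.rk_mono Finset.subset_union_right
    have h6 : M.rk F ≤ M.rk ((S ∩ T).map e ∪ F) := M.rk_mono Finset.subset_union_right
    have h7 : M.rk F ≤ M.rk ((S ∪ T).map e ∪ F) := M.rk_mono Finset.subset_union_right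
    rw [h1] at h7 ⊢
    rw [h2] at h6 ⊢
    omega
  rk_insert_le := fun S x => by
    try dsimp only
    set e := Function.Embedding.subtype (fun x : M.E => x ∉ F) with he
    have h1 : (insert x S).map e ∪ F = insert (e x) (S.map e ∪ F) := by
      rw [Finset.map_insert, Finset.insert_union]
    have h2 := M.rk_insert_le (S.map e ∪ F) (e x)
    have h3 : M.rk F ≤ M.rk (S.map e ∪ F) := M.rk_mono Finset.subset_union_right
    rw [h1]
    omega

end FinMatroid
namespace FinMatroid

/-- `P` is a Kazhdan–Lusztig family: it assigns to each loopless matroid a polynomial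
satisfying the three defining conditions of the Kazhdan–Lusztig polynomial.
Condition (2), `deg P_M < rk M / 2`, is expressed by the vanishing of all coefficients
in degrees `i` with `2 i ≥ rk M`; condition (3), the Laurent-polynomial identity
`t^(rk M) P_M(t⁻¹) = ∑_F χ_{M_F}(t) P_{M^F}(t)`, is expressed via evaluation at every
nonzero rational number. -/
def IsKLFamily (P : FinMatroid → Polynomial ℤ) : Prop :=
  (∀ M : FinMatroid, M.Loopless → M.rank = 0 → P M = 1) ∧
  (∀ M : FinMatroid, M.Loopless → 0 < M.rank →
      ∀ i : ℕ, M.rank ≤ 2 * i → (P M).coeff i = 0) ∧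
  (∀ M : FinMatroid, M.Loopless → ∀ q : ℚ, q ≠ 0 →
      q ^ M.rank * Polynomial.aeval q⁻¹ (P M) =
        ∑ F ∈ M.flats,
          Polynomial.aeval q ((M.localization F).charPoly) *
            Polynomial.aeval q (P (M.restrictionAt F)))

end FinMatroid


namespace FinMatroid

/-- The uniform matroid of rank `d` on a ground set of cardinality `m + d`:
the independent sets are exactly the sets of cardinality at most `d`, so the rank
of a set `S` is `min |S| d`. -/
noncomputable def uniformMatroid (m d : ℕ) : FinMatroid where
  E := Fin (m + d)
  fintypeE := inferInstance
  deceqE := inferInstance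
  rk S := min S.card d
  rk_empty := by simp
  rk_mono := fun S T h => by
    have := Finset.card_le_card h
    try dsimp only
    simp only [Nat.min_def]
    split_ifs <;> omega
  rk_submod := fun S T => by
    try dsimp only
    have h1 := Finset.card_union_add_card_inter S T
    have h2 : S.card ≤ (S ∪ T).card := Finset.card_le_card Finset.subset_union_left
    have h3 : T.card ≤ (S ∪ T).card := Finset.card_le_card Finset.subset_union_right
    simp only [Nat.min_def]
    split_ifs <;> omega
  rk_insert_le := fun S x => by
    try dsimp only
    have := Finset.card_insert_le x S
    simp only [Nat.min_def]
    split_ifs <;> omega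

end FinMatroid

namespace KLAux

open Polynomial FinMatroid Finset

/-- `N` behaves like the uniform matroid of rank `d` on `m + d` elements. -/
def IsUnif (N : FinMatroid) (m d : ℕ) : Prop :=
  Fintype.card N.E = m + d ∧ ∀ S : Finset N.E, N.rk S = min S.card d

lemma IsUnif.rank_eq {N : FinMatroid} {m d : ℕ} (h : IsUnif N m d) : N.rank = d := by
  have := h.2 (Finset.univ)
  rw [Finset.card_univ, h.1] at this
  simp only [FinMatroid.rank, this]
  omega

lemma IsUnif.loopless {N : FinMatroid} {m d : ℕ} (h : IsUnif N m d) (hd : 1 ≤ d) :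
    N.Loopless := by
  intro x
  rw [h.2, Finset.card_singleton]
  omega

lemma IsUnif.flat_of_card_lt {N : FinMatroid} {m d : ℕ} (h : IsUnif N m d)
    {F : Finset N.E} (hF : F.card < d) : N.IsFlat F := by
  intro x hx
  rw [h.2, h.2, Finset.card_insert_of_notMem hx]
  omega

lemma IsUnif.flat_iff {N : FinMatroid} {m d : ℕ} (h : IsUnif N m d)
    {F : Finset N.E} : N.IsFlat F ↔ F.card < d ∨ F = Finset.univ := by
  constructor
  · intro hf
    by_contra hc
    push_neg at hc
    obtain ⟨h1, h2⟩ := hc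
    obtain ⟨x, hx⟩ : ∃ x, x ∉ F := by
      by_contra hall
      push_neg at hall
      exact h2 (Finset.eq_univ_iff_forall.mpr hall)
    apply hf x hx
    rw [h.2, h.2, Finset.card_insert_of_notMem hx]
    omega
  · rintro (hF | rfl)
    · exact h.flat_of_card_lt hF
    · intro x hx
      exact absurd (Finset.mem_univ x) hx

lemma mem_flats {N : FinMatroid} {F : Finset N.E} : F ∈ N.flats ↔ N.IsFlat F := by
  simp [FinMatroid.flats]

/-- If every subset of `F` is a flat, then `μ(∅, F) = (-1)^{|F|}`. -/
lemma mu_of_all_flat {N : FinMatroid} (F : Finset N.E)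
    (hF : ∀ G ⊆ F, N.IsFlat G) : N.mu ∅ F = (-1) ^ F.card := by
  induction F using Finset.strongInductionOn with
  | _ F IH =>
  rcases eq_or_ne F ∅ with rfl | hne
  · rw [FinMatroid.mu]; simp
  · rw [FinMatroid.mu, if_neg (fun h => hne h.symm)]
    have hset : N.flats.filter (fun G => ∅ ⊆ G ∧ G ⊂ F) = F.ssubsets := by
      ext G
      simp only [Finset.mem_filter, mem_flats, Finset.mem_ssubsets]
      exact ⟨fun h => h.2.2, fun h => ⟨hF G h.subset, Finset.empty_subset _, h⟩⟩
    rw [hset, Finset.sum_attach _ (fun G => N.mu ∅ G)]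
    have hcong : ∑ G ∈ F.ssubsets, N.mu ∅ G = ∑ G ∈ F.ssubsets, (-1 : ℤ) ^ G.card := by
      refine Finset.sum_congr rfl fun G hG => ?_
      rw [Finset.mem_ssubsets] at hG
      exact IH G hG (fun G' hG' => hF G' (hG'.trans hG.subset))
    rw [hcong]
    have : F.ssubsets = F.powerset.erase F := rfl
    rw [this, Finset.sum_erase_eq_sub (Finset.mem_powerset_self F),
      Finset.sum_powerset_neg_one_pow_card, if_neg hne]
    ring

/-- The characteristic polynomial of a free matroid (rank = cardinality). -/
lemma charPoly_free {N : FinMatroid} (h : ∀ S : Finset N.E, N.rk S = S.card) :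
    N.charPoly = (X - 1) ^ (Fintype.card N.E) := by
  have hflat : ∀ F : Finset N.E, N.IsFlat F := by
    intro F x hx
    rw [h, h, Finset.card_insert_of_notMem hx]
    omega
  have hflats : N.flats = Finset.univ := by
    ext F; simp [mem_flats, hflat]
  have hrank : N.rank = Fintype.card N.E := by
    rw [FinMatroid.rank, h, Finset.card_univ]
  rw [FinMatroid.charPoly, hflats, hrank]
  have : (Finset.univ : Finset (Finset N.E)) = (Finset.univ : Finset N.E).powerset :=
    Finset.powerset_univ.symm
  rw [this, Finset.sum_powerset, Finset.card_univ]
  have hstep : ∀ j ∈ Finset.range (Fintype.card N.E + 1),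
      ∑ F ∈ Finset.powersetCard j (Finset.univ : Finset N.E),
        Polynomial.C (N.mu ∅ F) * Polynomial.X ^ (Fintype.card N.E - N.rk F)
      = Polynomial.C ((-1:ℤ)) ^ j * Polynomial.X ^ (Fintype.card N.E - j) *
          ((Fintype.card N.E).choose j : Polynomial ℤ) := by
    intro j hj
    have hc : ∀ F ∈ Finset.powersetCard j (Finset.univ : Finset N.E),
        Polynomial.C (N.mu ∅ F) * Polynomial.X ^ (Fintype.card N.E - N.rk F)
        = Polynomial.C ((-1:ℤ)) ^ j * Polynomial.X ^ (Fintype.card N.E - j) := by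
      intro F hF
      rw [Finset.mem_powersetCard] at hF
      rw [mu_of_all_flat F (fun G _ => hflat G), h, hF.2]
      simp [map_pow]
    rw [Finset.sum_congr rfl hc, Finset.sum_const, Finset.card_powersetCard,
      Finset.card_univ, nsmul_eq_mul]
    ring
  rw [Finset.sum_congr rfl hstep]
  have hx : (X - 1 : Polynomial ℤ) = Polynomial.C (-1 : ℤ) + X := by
    simp only [map_neg, map_one]; ring
  rw [hx, add_pow]

end KLAux

namespace KLAux

open Polynomial FinMatroid Finset

/-- flats of a uniform-like matroid -/
lemma IsUnif.flats_eq {N : FinMatroid} {m d : ℕ} (h : IsUnif N m d) (hd : 1 ≤ d) :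
    N.flats = ((Finset.range d).biUnion
        (fun k => Finset.powersetCard k (Finset.univ : Finset N.E))) ∪ {Finset.univ} := by
  ext F
  simp only [mem_flats, h.flat_iff, Finset.mem_union, Finset.mem_biUnion,
    Finset.mem_range, Finset.mem_powersetCard, Finset.mem_singleton]
  constructor
  · rintro (hF | rfl)
    · exact Or.inl ⟨F.card, hF, Finset.subset_univ F, rfl⟩
    · exact Or.inr rfl
  · rintro (⟨k, hk, _, rfl⟩ | rfl)
    · exact Or.inl hk
    · exact Or.inr rfl

lemma IsUnif.univ_not_mem_biUnion {N : FinMatroid} {m d : ℕ} (h : IsUnif N m d) :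
    (Finset.univ : Finset N.E) ∉ (Finset.range d).biUnion
      (fun k => Finset.powersetCard k (Finset.univ : Finset N.E)) := by
  simp only [Finset.mem_biUnion, Finset.mem_range, Finset.mem_powersetCard, not_exists]
  rintro k ⟨hk, _, hcard⟩
  rw [Finset.card_univ, h.1] at hcard
  omega

/-- Sum over the flats of a uniform-like matroid, for functions depending only on
cardinality (on the small flats). -/
lemma IsUnif.sum_flats {N : FinMatroid} {m d : ℕ} (h : IsUnif N m d) (hd : 1 ≤ d)
    {β : Type*} [AddCommMonoid β] (f : Finset N.E → β) (g : ℕ → β)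
    (hfg : ∀ F : Finset N.E, F.card < d → f F = g F.card) :
    ∑ F ∈ N.flats, f F =
      (∑ k ∈ Finset.range d, ((m + d).choose k) • g k) + f Finset.univ := by
  rw [h.flats_eq hd, Finset.sum_union, Finset.sum_biUnion, Finset.sum_singleton]
  · congr 1
    refine Finset.sum_congr rfl fun k hk => ?_
    rw [Finset.mem_range] at hk
    have : ∀ F ∈ Finset.powersetCard k (Finset.univ : Finset N.E), f F = g k := by
      intro F hF
      rw [Finset.mem_powersetCard] at hF
      rw [hfg F (hF.2 ▸ hk), hF.2]
    rw [Finset.sum_congr rfl this, Finset.sum_const, Finset.card_powersetCard,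
      Finset.card_univ, h.1]
  · intro a ha b hb hab
    simp only [Function.onFun]
    refine Finset.disjoint_left.mpr fun F hFa hFb => ?_
    rw [Finset.mem_powersetCard] at hFa hFb
    exact hab (hFa.2 ▸ hFb.2.symm ▸ rfl)
  · rw [Finset.disjoint_singleton_right]
    exact h.univ_not_mem_biUnion

lemma IsUnif.mu_univ {N : FinMatroid} {m d : ℕ} (h : IsUnif N m d) (hd : 1 ≤ d) :
    N.mu ∅ Finset.univ = -∑ k ∈ Finset.range d, ((m + d).choose k) • ((-1 : ℤ) ^ k) := by
  have huniv_ne : (Finset.univ : Finset N.E) ≠ ∅ := by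
    intro hcon
    have := Finset.card_univ (α := N.E)
    rw [hcon, h.1] at this
    simp at this
    omega
  rw [FinMatroid.mu, if_neg (fun hcon => huniv_ne hcon.symm)]
  have hset : N.flats.filter (fun G => ∅ ⊆ G ∧ G ⊂ Finset.univ) =
      (Finset.range d).biUnion
        (fun k => Finset.powersetCard k (Finset.univ : Finset N.E)) := by
    ext G
    simp only [Finset.mem_filter, mem_flats, h.flat_iff, Finset.mem_biUnion,
      Finset.mem_range, Finset.mem_powersetCard]
    constructor
    · rintro ⟨hG | rfl, _, hss⟩
      · exact ⟨G.card, hG, Finset.subset_univ G, rfl⟩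
      · exact absurd rfl hss.ne
    · rintro ⟨k, hk, _, rfl⟩
      refine ⟨Or.inl hk, Finset.empty_subset _, ?_⟩
      refine Finset.ssubset_univ_iff.mpr fun hcon => ?_
      rw [hcon, Finset.card_univ, h.1] at hk
      omega
  rw [hset, Finset.sum_attach _ (fun G => N.mu ∅ G), Finset.sum_biUnion]
  · congr 1
    refine Finset.sum_congr rfl fun k hk => ?_
    rw [Finset.mem_range] at hk
    have : ∀ G ∈ Finset.powersetCard k (Finset.univ : Finset N.E),
        N.mu ∅ G = (-1 : ℤ) ^ k := by
      intro G hG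
      rw [Finset.mem_powersetCard] at hG
      rw [mu_of_all_flat G (fun G' hG' => h.flat_of_card_lt
        (lt_of_le_of_lt (le_trans (Finset.card_le_card hG') (le_of_eq hG.2)) hk)), hG.2]
    rw [Finset.sum_congr rfl this, Finset.sum_const, Finset.card_powersetCard,
      Finset.card_univ, h.1]
  · intro a ha b hb hab
    simp only [Function.onFun]
    refine Finset.disjoint_left.mpr fun F hFa hFb => ?_
    rw [Finset.mem_powersetCard] at hFa hFb
    exact hab (hFa.2 ▸ hFb.2.symm ▸ rfl)

/-- The characteristic polynomial of a uniform-like matroid. -/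
noncomputable def unifCharPoly (m d : ℕ) : Polynomial ℤ :=
  ∑ k ∈ Finset.range d, ((m + d).choose k) •
    ((-1 : ℤ) ^ k • ((X : Polynomial ℤ) ^ (d - k) - 1))

lemma IsUnif.charPoly_eq {N : FinMatroid} {m d : ℕ} (h : IsUnif N m d) (hd : 1 ≤ d) :
    N.charPoly = unifCharPoly m d := by
  rw [FinMatroid.charPoly, h.rank_eq]
  rw [h.sum_flats hd _ (fun k => Polynomial.C ((-1:ℤ)^k) * X ^ (d - k))
    (fun F hF => by
      rw [mu_of_all_flat F (fun G hG => h.flat_of_card_lt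
          (lt_of_le_of_lt (Finset.card_le_card hG) hF)), h.2]
      congr 2
      omega)]
  have hrkuniv : N.rk Finset.univ = d := by
    rw [h.2, Finset.card_univ, h.1]; omega
  rw [hrkuniv, h.mu_univ hd]
  simp only [Nat.sub_self, pow_zero, mul_one, unifCharPoly]
  rw [map_neg, map_sum, ← Finset.sum_neg_distrib, ← Finset.sum_add_distrib]
  refine Finset.sum_congr rfl fun k hk => ?_
  simp only [zsmul_eq_mul, nsmul_eq_mul, smul_eq_mul, map_mul, map_pow, map_neg,
    map_one, map_natCast]
  push_cast
  ring

end KLAux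

namespace KLAux

open Polynomial FinMatroid Finset

lemma loc_charPoly {N : FinMatroid} {m d : ℕ} (h : IsUnif N m d)
    {F : Finset N.E} (hF : F.card < d) :
    (N.localization F).charPoly = (X - 1) ^ F.card := by
  have hcard : Fintype.card (N.localization F).E = F.card := by
    show Fintype.card {x : N.E // x ∈ F} = F.card
    simp [Fintype.card_coe]
  have hfree : ∀ S : Finset (N.localization F).E, (N.localization F).rk S = S.card := by
    intro S
    show N.rk (S.map _) = S.card
    rw [h.2]
    erw [Finset.card_map]
    have h2 := Finset.card_le_univ S
    rw [hcard] at h2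
    exact min_eq_left (by omega)
  rw [charPoly_free hfree, hcard]

lemma loc_univ_isUnif {N : FinMatroid} {m d : ℕ} (h : IsUnif N m d) :
    IsUnif (N.localization Finset.univ) m d := by
  constructor
  · show Fintype.card {x : N.E // x ∈ (Finset.univ : Finset N.E)} = m + d
    rw [Fintype.card_coe, Finset.card_univ, h.1]
  · intro S
    show N.rk (S.map _) = _
    rw [h.2]
    erw [Finset.card_map]

lemma restr_isUnif {N : FinMatroid} {m d : ℕ} (h : IsUnif N m d)
    {F : Finset N.E} {k : ℕ} (hFk : F.card = k) (hkd : k ≤ d) :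
    IsUnif (N.restrictionAt F) m (d - k) := by
  have hdisj : ∀ S : Finset {x : N.E // x ∉ F},
      Disjoint (S.map (Function.Embedding.subtype _)) F := by
    intro S
    refine Finset.disjoint_left.mpr fun x hx hxF => ?_
    rw [Finset.mem_map] at hx
    obtain ⟨y, _, rfl⟩ := hx
    exact y.2 hxF
  constructor
  · show Fintype.card {x : N.E // x ∉ F} = m + (d - k)
    rw [Fintype.card_subtype]
    have : (Finset.univ.filter (fun x : N.E => x ∉ F)) = Finset.univ \ F := by
      ext x; simp [Finset.mem_sdiff]
    rw [this, Finset.card_sdiff_of_subset (Finset.subset_univ F), Finset.card_univ, h.1, hFk]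
    omega
  · intro S
    show N.rk (S.map _ ∪ F) - N.rk F = _
    rw [h.2, h.2]
    erw [Finset.card_union_of_disjoint (hdisj S), Finset.card_map]
    rw [hFk]
    show min (S.card + k) d - min k d = min S.card (d - k)
    omega

lemma restr_univ_rank (N : FinMatroid) :
    (N.restrictionAt Finset.univ).rank = 0 := by
  show N.rk (_ ∪ Finset.univ) - N.rk Finset.univ = 0
  rw [Finset.union_eq_right.mpr (Finset.subset_univ _), Nat.sub_self]

lemma restr_univ_loopless (N : FinMatroid) :
    (N.restrictionAt Finset.univ).Loopless := by
  intro x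
  exact absurd (Finset.mem_univ x.1) x.2

lemma restr_empty_isUnif {N : FinMatroid} {m d : ℕ} (h : IsUnif N m d) :
    IsUnif (N.restrictionAt ∅) m d := by
  have := restr_isUnif h (F := ∅) (k := 0) (Finset.card_empty) (Nat.zero_le d)
  simpa using this

lemma empty_card_lt {N : FinMatroid} {m d : ℕ} (hd : 1 ≤ d) :
    (∅ : Finset N.E).card < d := by simp; omega

lemma loc_empty_charPoly {N : FinMatroid} {m d : ℕ} (h : IsUnif N m d) (hd : 1 ≤ d) :
    (N.localization ∅).charPoly = 1 := by
  have := loc_charPoly h (F := ∅) (by simp; omega)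
  simpa using this

lemma natDegree_P_le {P : FinMatroid → Polynomial ℤ} (hP : FinMatroid.IsKLFamily P)
    {N : FinMatroid} (hl : N.Loopless) {d : ℕ} (hrank : N.rank = d) (hd : 1 ≤ d) :
    (P N).natDegree ≤ d := by
  rw [Polynomial.natDegree_le_iff_coeff_eq_zero]
  intro i hi
  exact hP.2.1 N hl (by omega) i (by omega)

end KLAux

namespace KLAux

open Polynomial FinMatroid Finset

/-- reflect/eval relation over a field. -/
lemma aeval_reflect {K : Type*} [Field K] [Algebra ℤ K] (p : Polynomial ℤ) {d : ℕ}
    (hdeg : p.natDegree ≤ d) {x : K} (hx : x ≠ 0) :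
    Polynomial.aeval x (Polynomial.reflect d p) = x ^ d * Polynomial.aeval x⁻¹ p := by
  letI : Invertible (x⁻¹) := invertibleOfNonzero (inv_ne_zero hx)
  have h := Polynomial.eval₂_reflect_mul_pow (algebraMap ℤ K) (x⁻¹) d p hdeg
  rw [invOf_eq_inv, inv_inv] at h
  rw [Polynomial.aeval_def, Polynomial.aeval_def, ← h, inv_pow]
  field_simp

/-- Step A: the defining recursion as a polynomial identity over `ℤ`. -/
lemma reflect_eq_flatsum {P : FinMatroid → Polynomial ℤ} (hP : FinMatroid.IsKLFamily P)
    {N : FinMatroid} (hl : N.Loopless) {d : ℕ} (hrank : N.rank = d) (hd : 1 ≤ d) :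
    Polynomial.reflect d (P N) =
      ∑ F ∈ N.flats, (N.localization F).charPoly * P (N.restrictionAt F) := by
  have hdeg := natDegree_P_le hP hl hrank hd
  apply Polynomial.map_injective (Int.castRingHom ℚ) Int.cast_injective
  apply Polynomial.eq_of_infinite_eval_eq
  refine Set.Infinite.mono ?_ ((Set.finite_singleton (0:ℚ)).infinite_compl)
  intro x hx
  rw [Set.mem_compl_singleton_iff] at hx
  show Polynomial.eval x _ = Polynomial.eval x _
  rw [Polynomial.eval_map, Polynomial.eval_map, ← algebraMap_int_eq,
    ← Polynomial.aeval_def, ← Polynomial.aeval_def]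
  rw [aeval_reflect (P N) hdeg hx]
  have h3 := hP.2.2 N hl x hx
  rw [hrank] at h3
  rw [h3]
  simp only [map_sum, map_mul]

/-- The sum over flats of sizes `1 ≤ k < d`, plus the characteristic polynomial. -/
noncomputable def Rpoly0 (P : FinMatroid → Polynomial ℤ) (m d : ℕ) : Polynomial ℤ :=
  (∑ k ∈ Finset.Ico 1 d, ((m + d).choose k) •
    ((X - 1) ^ k * P (uniformMatroid m (d - k)))) + unifCharPoly m d

lemma uniformMatroid_isUnif (m d : ℕ) : IsUnif (uniformMatroid m d) m d :=
  ⟨Fintype.card_fin _, fun _ => rfl⟩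

/-- Step B: the flat-sum decomposed by cardinality, assuming the induction hypothesis
for smaller ranks. -/
lemma reflect_eq_decomp {P : FinMatroid → Polynomial ℤ} (hP : FinMatroid.IsKLFamily P)
    {N : FinMatroid} {m d : ℕ} (h : IsUnif N m d) (hd : 1 ≤ d)
    (IH : ∀ k ∈ Finset.Ico 1 d, ∀ N' : FinMatroid,
      IsUnif N' m (d - k) → P N' = P (uniformMatroid m (d - k))) :
    Polynomial.reflect d (P N) = P (N.restrictionAt ∅) + Rpoly0 P m d := by
  rw [reflect_eq_flatsum hP (h.loopless hd) h.rank_eq hd]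
  rw [h.sum_flats hd _
    (fun k => if k = 0 then P (N.restrictionAt ∅)
      else (X - 1) ^ k * P (uniformMatroid m (d - k)))
    (fun F hF => by
      show (N.localization F).charPoly * P (N.restrictionAt F) =
        if F.card = 0 then P (N.restrictionAt ∅)
        else (X - 1) ^ F.card * P (uniformMatroid m (d - F.card))
      rcases Nat.eq_zero_or_pos F.card with h0 | h1
      · have hFe : F = ∅ := Finset.card_eq_zero.mp h0
        rw [h0, if_pos rfl, hFe, loc_empty_charPoly h hd, one_mul]
      · rw [if_neg (by omega), loc_charPoly h hF]
        congr 1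
        exact IH F.card (Finset.mem_Ico.mpr ⟨h1, hF⟩) _
          (restr_isUnif h rfl (le_of_lt hF)))]
  have huc : (N.localization Finset.univ).charPoly = unifCharPoly m d :=
      (loc_univ_isUnif h).charPoly_eq hd
  have hru : P (N.restrictionAt Finset.univ) = 1 :=
    hP.1 _ (restr_univ_loopless N) (restr_univ_rank N)
  rw [huc, hru, mul_one]
  rw [Finset.range_eq_Ico, Finset.sum_eq_sum_Ico_succ_bot (by omega), zero_add]
  simp only [reduceIte, Nat.choose_zero_right, one_smul]
  have hcg : ∀ k ∈ Finset.Ico 1 d, ((m + d).choose k) •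
      (if k = 0 then P (N.restrictionAt ∅)
        else (X - 1) ^ k * P (uniformMatroid m (d - k)))
      = ((m + d).choose k) • ((X - 1) ^ k * P (uniformMatroid m (d - k))) := by
    intro k hk
    rw [Finset.mem_Ico] at hk
    rw [if_neg (by omega)]
  rw [Finset.sum_congr rfl hcg, Rpoly0]
  ring

/-- Uniqueness: any uniform-like matroid has the same KL polynomial as the uniform
matroid with the same parameters. -/
lemma P_eq_uniform {P : FinMatroid → Polynomial ℤ} (hP : FinMatroid.IsKLFamily P) :
    ∀ d, 1 ≤ d → ∀ m (N : FinMatroid), IsUnif N m d → P N = P (uniformMatroid m d) := by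
  intro d
  induction d using Nat.strong_induction_on with
  | _ d IHd =>
  intro hd m N hN
  have IH : ∀ k ∈ Finset.Ico 1 d, ∀ N' : FinMatroid,
      IsUnif N' m (d - k) → P N' = P (uniformMatroid m (d - k)) := by
    intro k hk N' hN'
    rw [Finset.mem_Ico] at hk
    exact IHd (d - k) (by omega) (by omega) m N' hN'
  have hU := uniformMatroid_isUnif m d
  have e1 := reflect_eq_decomp hP hN hd IH
  have e2 := reflect_eq_decomp hP hU hd IH
  have hab : P (N.restrictionAt ∅) = P ((uniformMatroid m d).restrictionAt ∅) := by
    have hNe := restr_empty_isUnif hN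
    have hUe := restr_empty_isUnif hU
    ext i
    rcases le_or_gt d (2 * i) with hi | hi
    · rw [hP.2.1 _ (hNe.loopless hd) (by rw [hNe.rank_eq]; omega) i (by rw [hNe.rank_eq]; omega),
        hP.2.1 _ (hUe.loopless hd) (by rw [hUe.rank_eq]; omega) i (by rw [hUe.rank_eq]; omega)]
    · have hcoe : ∀ (M : FinMatroid), M.Loopless → M.rank = d →
          (Polynomial.reflect d (P M)).coeff i = 0 := by
        intro M hMl hMr
        rw [Polynomial.coeff_reflect, Polynomial.revAt_le (by omega)]
        exact hP.2.1 M hMl (by omega) (d - i) (by omega)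
      have c1 := congrArg (fun p => Polynomial.coeff p i) e1
      have c2 := congrArg (fun p => Polynomial.coeff p i) e2
      simp only [Polynomial.coeff_add] at c1 c2
      rw [hcoe N (hN.loopless hd) hN.rank_eq] at c1
      rw [hcoe _ (hU.loopless hd) hU.rank_eq] at c2
      omega
  have hrefl : Polynomial.reflect d (P N) = Polynomial.reflect d (P (uniformMatroid m d)) := by
    rw [e1, e2, hab]
  ext i
  have := congrArg (fun p => Polynomial.coeff p (Polynomial.revAt d i)) hrefl
  simpa only [Polynomial.coeff_reflect, Polynomial.revAt_invol] using this

/-- The final polynomial recursion for the uniform matroid itself. -/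
lemma reflect_uniform_eq {P : FinMatroid → Polynomial ℤ} (hP : FinMatroid.IsKLFamily P)
    (m d : ℕ) (hd : 1 ≤ d) :
    Polynomial.reflect d (P (uniformMatroid m d)) =
      (∑ k ∈ Finset.range d, ((m + d).choose k) •
        ((X - 1) ^ k * P (uniformMatroid m (d - k)))) + unifCharPoly m d := by
  have hU := uniformMatroid_isUnif m d
  have IH : ∀ k ∈ Finset.Ico 1 d, ∀ N' : FinMatroid,
      IsUnif N' m (d - k) → P N' = P (uniformMatroid m (d - k)) := by
    intro k hk N' hN'
    rw [Finset.mem_Ico] at hk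
    exact P_eq_uniform hP (d - k) (by omega) m N' hN'
  have e := reflect_eq_decomp hP hU hd IH
  have he : P ((uniformMatroid m d).restrictionAt ∅) = P (uniformMatroid m d) := by
    have := P_eq_uniform hP d hd m _ (restr_empty_isUnif hU)
    simpa using this
  rw [e, he, Rpoly0]
  rw [Finset.range_eq_Ico, Finset.sum_eq_sum_Ico_succ_bot (show 0 < d by omega), zero_add]
  simp only [Nat.choose_zero_right, one_smul, Nat.sub_zero, pow_zero, one_mul]
  ring

end KLAux

namespace KLAux

open PowerSeries

variable {K : Type*} [Field K]

/-- The power series `(1 - y X)^{-n} = ∑_i C(n+i-1, i) y^i X^i`. -/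
noncomputable def geomPow (y : K) (n : ℕ) : PowerSeries K :=
  PowerSeries.mk fun i => ((n + i - 1).choose i : K) * y ^ i

lemma coeff_geomPow (y : K) (n i : ℕ) :
    PowerSeries.coeff i (geomPow y n) = ((n + i - 1).choose i : K) * y ^ i :=
  coeff_mk i _

lemma geomPow_zero (y : K) : geomPow y 0 = 1 := by
  ext i
  rw [coeff_geomPow, PowerSeries.coeff_one]
  rcases Nat.eq_zero_or_pos i with rfl | hi
  · simp
  · rw [if_neg (by omega), Nat.choose_eq_zero_of_lt (by omega)]
    simp

lemma one_sub_mul_geomPow (y : K) (n : ℕ) :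
    (1 - PowerSeries.C y * PowerSeries.X) * geomPow y (n + 1) = geomPow y n := by
  ext i
  rw [sub_mul, one_mul, map_sub, mul_assoc, PowerSeries.coeff_C_mul]
  cases i with
  | zero =>
    simp only [PowerSeries.coeff_zero_eq_constantCoeff, map_mul, constantCoeff_X, zero_mul,
      mul_zero, sub_zero]
    have h1 := coeff_geomPow y (n+1) 0
    have h2 := coeff_geomPow y n 0
    rw [PowerSeries.coeff_zero_eq_constantCoeff] at h1 h2
    rw [h1, h2]; simp
  | succ j =>
    rw [PowerSeries.coeff_succ_X_mul, coeff_geomPow, coeff_geomPow, coeff_geomPow]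
    have e1 : n + 1 + (j + 1) - 1 = (n + j) + 1 := by omega
    have e2 : n + 1 + j - 1 = n + j := by omega
    have e3 : n + (j + 1) - 1 = n + j := by omega
    rw [e1, e2, e3, Nat.choose_succ_succ' (n + j) j]
    push_cast
    ring

lemma pow_mul_geomPow (y : K) (n : ℕ) :
    (1 - PowerSeries.C y * PowerSeries.X) ^ n * geomPow y n = 1 := by
  induction n with
  | zero => simp [geomPow_zero]
  | succ n IH =>
    calc (1 - PowerSeries.C y * PowerSeries.X) ^ (n + 1) * geomPow y (n + 1)
        = (1 - PowerSeries.C y * PowerSeries.X) ^ n *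
            ((1 - PowerSeries.C y * PowerSeries.X) * geomPow y (n + 1)) := by ring
      _ = 1 := by rw [one_sub_mul_geomPow]; exact IH

lemma constantCoeff_one_sub_C_mul_X (y : K) :
    constantCoeff (1 - PowerSeries.C y * PowerSeries.X) = 1 := by
  simp

lemma one_sub_C_mul_X_pow_ne_zero (y : K) (n : ℕ) :
    (1 - PowerSeries.C y * PowerSeries.X) ^ n ≠ 0 := by
  intro hcon
  have := congrArg (constantCoeff) hcon
  rw [map_pow, constantCoeff_one_sub_C_mul_X, one_pow, map_zero] at this
  exact one_ne_zero this

lemma geomPow_add (y : K) (a b : ℕ) :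
    geomPow y a * geomPow y b = geomPow y (a + b) := by
  have h := pow_mul_geomPow y (a + b)
  rw [pow_add] at h
  have h2 : (1 - PowerSeries.C y * PowerSeries.X) ^ a *
      (1 - PowerSeries.C y * PowerSeries.X) ^ b * (geomPow y a * geomPow y b) = 1 := by
    calc (1 - PowerSeries.C y * PowerSeries.X) ^ a *
        (1 - PowerSeries.C y * PowerSeries.X) ^ b * (geomPow y a * geomPow y b)
        = ((1 - PowerSeries.C y * PowerSeries.X) ^ a * geomPow y a) *
          ((1 - PowerSeries.C y * PowerSeries.X) ^ b * geomPow y b) := by ring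
      _ = 1 := by rw [pow_mul_geomPow, pow_mul_geomPow, one_mul]
  exact mul_left_cancel₀
    (by rw [← pow_add]; exact one_sub_C_mul_X_pow_ne_zero y _) (h2.trans h.symm)

lemma geomPow_one_pow (y : K) (k : ℕ) : (geomPow y 1) ^ k = geomPow y k := by
  induction k with
  | zero => rw [pow_zero, geomPow_zero]
  | succ k IH => rw [pow_succ, IH, geomPow_add]

lemma coeff_pow_eq_zero {W : PowerSeries K} (hW : constantCoeff W = 0)
    {k n : ℕ} (hn : n < k) : PowerSeries.coeff n (W ^ k) = 0 := by
  induction k generalizing n with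
  | zero => omega
  | succ k IH =>
    rw [pow_succ, mul_comm, PowerSeries.coeff_mul]
    refine Finset.sum_eq_zero fun p hp => ?_
    rw [Finset.HasAntidiagonal.mem_antidiagonal] at hp
    rcases Nat.eq_zero_or_pos p.1 with h0 | h1
    · rw [h0, PowerSeries.coeff_zero_eq_constantCoeff, hW, zero_mul]
    · rw [IH (by omega), mul_zero]

/-- Key convolution lemma. -/
lemma conv_coeff {W : PowerSeries K} (hW : constantCoeff W = 0) (c : ℕ → K)
    (F : PowerSeries K) (d : ℕ) :
    PowerSeries.coeff d
      ((PowerSeries.mk fun n => ∑ k ∈ Finset.Icc 1 n, c k * PowerSeries.coeff n (W ^ k)) * F)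
      = ∑ k ∈ Finset.Icc 1 d, c k * PowerSeries.coeff d (W ^ k * F) := by
  rw [PowerSeries.coeff_mul]
  have step : ∀ p ∈ Finset.HasAntidiagonal.antidiagonal d,
      (PowerSeries.coeff p.1
          (PowerSeries.mk fun n => ∑ k ∈ Finset.Icc 1 n, c k * PowerSeries.coeff n (W ^ k))) *
        PowerSeries.coeff p.2 F
      = ∑ k ∈ Finset.Icc 1 d, c k * (PowerSeries.coeff p.1 (W ^ k) *
          PowerSeries.coeff p.2 F) := by
    intro p hp
    rw [Finset.HasAntidiagonal.mem_antidiagonal] at hp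
    rw [coeff_mk, Finset.sum_mul]
    have hsub : Finset.Icc 1 p.1 ⊆ Finset.Icc 1 d :=
      Finset.Icc_subset_Icc_right (by omega)
    have hzero : ∀ k ∈ Finset.Icc 1 d, k ∉ Finset.Icc 1 p.1 →
        c k * PowerSeries.coeff p.1 (W ^ k) * PowerSeries.coeff p.2 F = 0 := by
      intro k hk hk'
      rw [Finset.mem_Icc] at hk
      simp only [Finset.mem_Icc, not_and, not_le] at hk'
      rw [coeff_pow_eq_zero hW (hk' hk.1), mul_zero, zero_mul]
    rw [Finset.sum_subset hsub hzero]
    exact Finset.sum_congr rfl fun k _ => by ring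
  rw [Finset.sum_congr rfl step, Finset.sum_comm]
  refine Finset.sum_congr rfl fun k _ => ?_
  rw [← Finset.mul_sum, PowerSeries.coeff_mul]

/-- Master computation: coefficients of `geomPow y (m+1) * Φ(t, u (1-yu)⁻¹)`-type series. -/
lemma coeff_geomPow_mul_comp (y : K) (m : ℕ) (c : ℕ → K) (d : ℕ) :
    PowerSeries.coeff d (geomPow y (m + 1) *
      (PowerSeries.mk fun n => ∑ k ∈ Finset.Icc 1 n,
        c k * PowerSeries.coeff n ((PowerSeries.X * geomPow y 1) ^ k)))
    = ∑ k ∈ Finset.Icc 1 d, c k * (((m + d).choose (d - k) : K) * y ^ (d - k)) := by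
  have hW : constantCoeff (PowerSeries.X * geomPow y 1) = 0 := by
    rw [map_mul, constantCoeff_X, zero_mul]
  rw [mul_comm, conv_coeff hW]
  refine Finset.sum_congr rfl fun k hk => ?_
  rw [Finset.mem_Icc] at hk
  congr 1
  rw [mul_pow, geomPow_one_pow, mul_assoc, geomPow_add]
  obtain ⟨j, rfl⟩ : ∃ j, d = j + k := ⟨d - k, by omega⟩
  rw [PowerSeries.coeff_X_pow_mul, coeff_geomPow]
  simp only [Nat.add_sub_cancel]
  congr 3
  omega

/-- Geometric series closed form. -/
lemma geom_closed {W : PowerSeries K} (hW : constantCoeff W = 0) (s : K) :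
    (PowerSeries.mk fun n => ∑ k ∈ Finset.Icc 1 n, s ^ k * PowerSeries.coeff n (W ^ k)) *
      (1 - PowerSeries.C s * W) = PowerSeries.C s * W := by
  ext d
  rw [conv_coeff hW]
  have hsummand : ∀ k, PowerSeries.coeff d (W ^ k * (1 - PowerSeries.C s * W))
      = PowerSeries.coeff d (W ^ k) - s * PowerSeries.coeff d (W ^ (k + 1)) := by
    intro k
    have : W ^ k * (1 - PowerSeries.C s * W) = W ^ k - PowerSeries.C s * W ^ (k + 1) := by
      ring
    rw [this, map_sub, PowerSeries.coeff_C_mul]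
  rw [Finset.sum_congr rfl (fun k _ => by rw [hsummand k])]
  have htel : ∑ k ∈ Finset.Icc 1 d, s ^ k *
      (PowerSeries.coeff d (W ^ k) - s * PowerSeries.coeff d (W ^ (k + 1)))
      = s ^ 1 * PowerSeries.coeff d (W ^ 1) -
        s ^ (d + 1) * PowerSeries.coeff d (W ^ (d + 1)) := by
    rw [← Finset.Ico_add_one_right_eq_Icc, Finset.sum_Ico_eq_sum_range]
    have hc2 : ∀ i ∈ Finset.range (d + 1 - 1),
        s ^ (1 + i) * (PowerSeries.coeff d (W ^ (1 + i)) -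
          s * PowerSeries.coeff d (W ^ (1 + i + 1)))
        = (fun j => s ^ (j + 1) * PowerSeries.coeff d (W ^ (j + 1))) i -
          (fun j => s ^ (j + 1) * PowerSeries.coeff d (W ^ (j + 1))) (i + 1) := by
      intro i _
      simp only []
      rw [show 1 + i = i + 1 by omega, show i + 1 + 1 = i + 2 by omega]
      ring
    rw [Finset.sum_congr rfl hc2,
      Finset.sum_range_sub' (fun j => s ^ (j + 1) * PowerSeries.coeff d (W ^ (j + 1)))
        (d + 1 - 1)]
    simp only [zero_add, Nat.add_sub_cancel]
  rw [htel, pow_one, pow_one, coeff_pow_eq_zero hW (Nat.lt_succ_self d), mul_zero, sub_zero,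
    PowerSeries.coeff_C_mul]

end KLAux

namespace KLAux

open PowerSeries

variable {K : Type*} [Field K]

lemma pow_inv_eq_geomPow (y : K) (n : ℕ) :
    (((1 - PowerSeries.C y * PowerSeries.X) ^ n)⁻¹ : PowerSeries K) = geomPow y n := by
  have hne : constantCoeff ((1 - PowerSeries.C y * PowerSeries.X) ^ n) ≠ 0 := by
    rw [map_pow, constantCoeff_one_sub_C_mul_X, one_pow]
    exact one_ne_zero
  have h1 := PowerSeries.mul_inv_cancel _ hne
  have h2 := pow_mul_geomPow y n
  exact mul_left_cancel₀ (one_sub_C_mul_X_pow_ne_zero y n) (h1.trans h2.symm)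

lemma inv_eq_geomPow_one (y : K) :
    ((1 - PowerSeries.C y * PowerSeries.X)⁻¹ : PowerSeries K) = geomPow y 1 := by
  have := pow_inv_eq_geomPow y 1
  rwa [pow_one] at this

lemma one_add_X_eq (K : Type*) [Field K] :
    (1 + PowerSeries.X : PowerSeries K) = 1 - PowerSeries.C (-1) * PowerSeries.X := by
  rw [map_neg, map_one]; ring

/-- The characteristic-polynomial part of the generating function identity. -/
lemma chi_series (t : K) (m : ℕ) :
    geomPow (-1 : K) (m + 1) * (PowerSeries.mk fun n => ∑ k ∈ Finset.Icc 1 n,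
        (t ^ k - 1) * PowerSeries.coeff n ((PowerSeries.X * geomPow (-1 : K) 1) ^ k))
    = (PowerSeries.C t * PowerSeries.X - PowerSeries.X) *
        (((1 - PowerSeries.C (t - 1) * PowerSeries.X) * (1 + PowerSeries.X) ^ m)⁻¹) := by
  set O : PowerSeries K := 1 + PowerSeries.X with hOdef
  set B : PowerSeries K := 1 - PowerSeries.C (t - 1) * PowerSeries.X with hBdef
  set g : PowerSeries K := geomPow (-1 : K) 1 with hgdef
  set W : PowerSeries K := PowerSeries.X * g with hWdef
  have hW0 : constantCoeff W = 0 := by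
    rw [hWdef, map_mul, constantCoeff_X, zero_mul]
  have hOg : O * g = 1 := by
    have := pow_mul_geomPow (-1 : K) 1
    rw [pow_one, ← one_add_X_eq] at this
    exact this
  have hOW : O * W = PowerSeries.X := by
    rw [hWdef, mul_comm PowerSeries.X g, ← mul_assoc, hOg, one_mul]
  have hGt := geom_closed hW0 t
  have hGone := geom_closed hW0 1
  rw [map_one, one_mul] at hGone
  have hGone' : (PowerSeries.mk fun n => ∑ k ∈ Finset.Icc 1 n,
      (1:K) ^ k * PowerSeries.coeff n (W ^ k)) = PowerSeries.X := by
    have h2 : (PowerSeries.mk fun n => ∑ k ∈ Finset.Icc 1 n,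
        (1:K) ^ k * PowerSeries.coeff n (W ^ k)) * ((1 - W) * O) = PowerSeries.X := by
      rw [← mul_assoc, hGone, mul_comm, hOW]
    have h3 : (1 - W) * O = 1 := by
      rw [sub_mul, one_mul, mul_comm W O, hOW, hOdef]; ring
    rwa [h3, mul_one] at h2
  have hsplit : (PowerSeries.mk fun n => ∑ k ∈ Finset.Icc 1 n,
      (t ^ k - 1) * PowerSeries.coeff n (W ^ k))
      = (PowerSeries.mk fun n => ∑ k ∈ Finset.Icc 1 n,
          t ^ k * PowerSeries.coeff n (W ^ k)) - PowerSeries.X := by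
    rw [← hGone']
    ext n
    simp only [map_sub, coeff_mk, ← Finset.sum_sub_distrib]
    exact Finset.sum_congr rfl fun k _ => by ring
  have hBO : O * (1 - PowerSeries.C t * W) = B := by
    have he : O * (1 - PowerSeries.C t * W) = O - PowerSeries.C t * (O * W) := by ring
    rw [he, hOW, hOdef, hBdef, map_sub, map_one]
    ring
  have hBGt : B * (PowerSeries.mk fun n => ∑ k ∈ Finset.Icc 1 n,
      t ^ k * PowerSeries.coeff n (W ^ k)) = PowerSeries.C t * PowerSeries.X := by
    calc B * (PowerSeries.mk fun n => ∑ k ∈ Finset.Icc 1 n,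
          t ^ k * PowerSeries.coeff n (W ^ k))
        = O * ((PowerSeries.mk fun n => ∑ k ∈ Finset.Icc 1 n,
            t ^ k * PowerSeries.coeff n (W ^ k)) * (1 - PowerSeries.C t * W)) := by
          rw [← hBO]; ring
      _ = O * (PowerSeries.C t * W) := by rw [hGt]
      _ = PowerSeries.C t * (O * W) := by ring
      _ = PowerSeries.C t * PowerSeries.X := by rw [hOW]
  have hOpow : O ^ (m + 1) * geomPow (-1 : K) (m + 1) = 1 := by
    rw [hOdef, one_add_X_eq]
    exact pow_mul_geomPow _ _
  have hBOmne : constantCoeff (B * O ^ m) ≠ 0 := by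
    rw [map_mul, map_pow, hBdef, hOdef]
    simp
  have hZne : B * O ^ (m + 1) ≠ 0 := by
    intro hcon
    have := congrArg (constantCoeff) hcon
    rw [map_mul, map_pow, hBdef, hOdef, map_zero] at this
    simp at this
  apply mul_right_cancel₀ hZne
  rw [hsplit]
  calc geomPow (-1 : K) (m + 1) * ((PowerSeries.mk fun n => ∑ k ∈ Finset.Icc 1 n,
        t ^ k * PowerSeries.coeff n (W ^ k)) - PowerSeries.X) * (B * O ^ (m + 1))
      = (O ^ (m + 1) * geomPow (-1 : K) (m + 1)) *
        (B * (PowerSeries.mk fun n => ∑ k ∈ Finset.Icc 1 n,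
          t ^ k * PowerSeries.coeff n (W ^ k)) - B * PowerSeries.X) := by ring
    _ = PowerSeries.C t * PowerSeries.X - B * PowerSeries.X := by
        rw [hOpow, hBGt, one_mul]
    _ = (PowerSeries.C t * PowerSeries.X - PowerSeries.X) * O := by
        rw [hBdef, hOdef, map_sub, map_one]; ring
    _ = (PowerSeries.C t * PowerSeries.X - PowerSeries.X) * ((B * O ^ m)⁻¹ *
          (B * O ^ m)) * O := by
        rw [mul_comm ((B * O ^ m)⁻¹) (B * O ^ m), PowerSeries.mul_inv_cancel _ hBOmne,
          mul_one]
    _ = (PowerSeries.C t * PowerSeries.X - PowerSeries.X) * (B * O ^ m)⁻¹ *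
          (B * O ^ (m + 1)) := by ring

end KLAux

namespace KLAux

open PowerSeries

lemma sum_range_to_Icc {β : Type*} [AddCommMonoid β] (d : ℕ) (f : ℕ → β) :
    ∑ k ∈ Finset.range d, f k = ∑ j ∈ Finset.Icc 1 d, f (d - j) := by
  rw [← Finset.Ico_add_one_right_eq_Icc, Finset.sum_Ico_eq_sum_range, Nat.add_sub_cancel,
    ← Finset.sum_range_reflect]
  refine Finset.sum_congr rfl fun i _ => ?_
  congr 1
  omega

end KLAux

open PowerSeries in
/-- The generating-function identity for the Kazhdan–Lusztig
polynomials `P_{m,d}(t)` of uniform matroids.  We work in `K⟦u⟧` where `K = ℚ(t)`: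
with `Φ_m(t,u) = ∑_{d ≥ 1} P_{m,d}(t) u^d`, the series `Φ_m(t⁻¹, tu)` (whose `u^d`
coefficient is `t^d P_{m,d}(t⁻¹)`) equals
`(tu - u)/((1 - tu + u)(1 + u)^m) + (1 - tu + u)^{-(m+1)} Φ_m(t, u/(1 - tu + u))`,
where the composed series `Φ_m(t, u/(1 - tu + u))` is written out coefficientwise:
its `u^d` coefficient is `∑_{k=1}^{d} P_{m,k}(t) · [u^d] (u/(1 - tu + u))^k`. -/
theorem kl_uniform_generating_function (P : FinMatroid → Polynomial ℤ)
    (hP : FinMatroid.IsKLFamily P) (m : ℕ) :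
    ∀ (t : RatFunc ℚ), t = RatFunc.X →
    ∀ B : PowerSeries (RatFunc ℚ),
      B = 1 - PowerSeries.C t * PowerSeries.X + PowerSeries.X →
    (PowerSeries.mk fun d => if d = 0 then (0 : RatFunc ℚ)
        else t ^ d * Polynomial.aeval t⁻¹ (P (FinMatroid.uniformMatroid m d))) =
      (PowerSeries.C t * PowerSeries.X - PowerSeries.X) *
          (B * (1 + PowerSeries.X) ^ m)⁻¹ +
        (B ^ (m + 1))⁻¹ *
          PowerSeries.mk (fun d => ∑ k ∈ Finset.Icc 1 d,
            Polynomial.aeval t (P (FinMatroid.uniformMatroid m k)) *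
              PowerSeries.coeff d ((PowerSeries.X * B⁻¹) ^ k)) := by
  intro t ht B hB
  have htne : t ≠ 0 := by rw [ht]; exact RatFunc.X_ne_zero
  have hB' : B = 1 - PowerSeries.C (t - 1) * PowerSeries.X := by
    rw [hB, map_sub, map_one]; ring
  rw [hB', KLAux.inv_eq_geomPow_one, KLAux.pow_inv_eq_geomPow, ← KLAux.chi_series t m]
  ext d
  rw [map_add, coeff_mk,
    KLAux.coeff_geomPow_mul_comp (-1 : RatFunc ℚ) m (fun k => t ^ k - 1) d,
    KLAux.coeff_geomPow_mul_comp (t - 1 : RatFunc ℚ) m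
      (fun k => Polynomial.aeval t (P (FinMatroid.uniformMatroid m k))) d]
  rcases Nat.eq_zero_or_pos d with rfl | hd
  · simp
  rw [if_neg (by omega)]
  have hU := KLAux.uniformMatroid_isUnif m d
  have hdeg := KLAux.natDegree_P_le hP (hU.loopless hd) hU.rank_eq hd
  rw [← KLAux.aeval_reflect _ hdeg htne, KLAux.reflect_uniform_eq hP m d hd]
  rw [map_add, map_sum]
  have hchi : Polynomial.aeval t (KLAux.unifCharPoly m d) =
      ∑ k ∈ Finset.Icc 1 d, (t ^ k - 1) *
        (((m + d).choose (d - k) : RatFunc ℚ) * (-1 : RatFunc ℚ) ^ (d - k)) := by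
    rw [KLAux.unifCharPoly, map_sum]
    have h1 : ∀ k ∈ Finset.range d, Polynomial.aeval t (((m + d).choose k) •
        ((-1 : ℤ) ^ k • ((Polynomial.X : Polynomial ℤ) ^ (d - k) - 1)))
        = ((m + d).choose k : RatFunc ℚ) * ((-1 : RatFunc ℚ) ^ k * (t ^ (d - k) - 1)) := by
      intro k _
      rw [map_nsmul, map_zsmul, map_sub, map_pow, Polynomial.aeval_X, map_one,
        nsmul_eq_mul, zsmul_eq_mul]
      push_cast
      ring
    rw [Finset.sum_congr rfl h1, KLAux.sum_range_to_Icc d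
      (fun k => ((m + d).choose k : RatFunc ℚ) * ((-1 : RatFunc ℚ) ^ k * (t ^ (d - k) - 1)))]
    refine Finset.sum_congr rfl fun j hj => ?_
    rw [Finset.mem_Icc] at hj
    rw [show d - (d - j) = j by omega]
    ring
  have hp : ∑ k ∈ Finset.range d, Polynomial.aeval t
      (((m + d).choose k) • ((Polynomial.X - 1) ^ k * P (FinMatroid.uniformMatroid m (d - k))))
      = ∑ k ∈ Finset.Icc 1 d, Polynomial.aeval t (P (FinMatroid.uniformMatroid m k)) *
          (((m + d).choose (d - k) : RatFunc ℚ) * (t - 1 : RatFunc ℚ) ^ (d - k)) := by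
    have h1 : ∀ k ∈ Finset.range d, Polynomial.aeval t (((m + d).choose k) •
        ((Polynomial.X - 1) ^ k * P (FinMatroid.uniformMatroid m (d - k))))
        = ((m + d).choose k : RatFunc ℚ) * ((t - 1) ^ k *
            Polynomial.aeval t (P (FinMatroid.uniformMatroid m (d - k)))) := by
      intro k _
      rw [map_nsmul, map_mul, map_pow, map_sub, Polynomial.aeval_X, map_one, nsmul_eq_mul]
    rw [Finset.sum_congr rfl h1, KLAux.sum_range_to_Icc d
      (fun k => ((m + d).choose k : RatFunc ℚ) * ((t - 1) ^ k *
        Polynomial.aeval t (P (FinMatroid.uniformMatroid m (d - k)))))]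
    refine Finset.sum_congr rfl fun j hj => ?_
    rw [Finset.mem_Icc] at hj
    rw [show d - (d - j) = j by omega]
    ring
  rw [hchi, hp]
  ring
end

section
/- Let k be a field of characteristic zero. For tuples x ∈ k^m, y ∈ k^n define the super power sum p_{m,n,s}(x,y) := x₁^s + ⋯ + x_m^s − y₁^s − ⋯ − y_n^s. Suppose x ∈ k^m, y ∈ k^n, x' ∈ k^{m'}, y' ∈ k^{n'} satisfy: p_{m,n,s}(x,y) = p_{m',n',s}(x',y') for all s ≥ 0; all entries of x and y are nonzero; x_i ≠ y_j for all i,j; and x'_i ≠ y'_j for all i,j. Then m = m', n = n', and there exist permutations σ ∈ S_m and τ ∈ S_n such that x'_i = x_{σ(i)} for all i and y'_j = y_{τ(j)} for all j. -/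
lemma multiset_eq_of_powersum_eq {k : Type*} [Field k] [CharZero k] (S T : Multiset k)
    (h : ∀ s : ℕ, (S.map (· ^ s)).sum = (T.map (· ^ s)).sum) : S = T := by
  classical
  set F : Finset k := S.toFinset ∪ T.toFinset with hF
  have hgen : ∀ (U : Multiset k), U.toFinset ⊆ F →
      ∀ s : ℕ, (U.map (· ^ s)).sum = ∑ a ∈ F, (U.count a : k) * a ^ s := by
    intro U hU s
    rw [Finset.sum_multiset_map_count]
    rw [Finset.sum_subset hU]
    · exact Finset.sum_congr rfl fun a _ => by rw [nsmul_eq_mul]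
    · intro a _ ha
      have : U.count a = 0 := Multiset.count_eq_zero_of_notMem (by simpa using ha)
      simp [this]
  have hsum : ∀ s : ℕ, ∑ a ∈ F, (((S.count a : k) - (T.count a : k)) * a ^ s) = 0 := by
    intro s
    have h1 := hgen S Finset.subset_union_left s
    have h2 := hgen T Finset.subset_union_right s
    have h3 := h s
    rw [h1, h2] at h3
    calc ∑ a ∈ F, (((S.count a : k) - (T.count a : k)) * a ^ s)
        = (∑ a ∈ F, (S.count a : k) * a ^ s) - ∑ a ∈ F, (T.count a : k) * a ^ s := by
          rw [← Finset.sum_sub_distrib]; exact Finset.sum_congr rfl fun a _ => by ring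
      _ = 0 := by rw [h3, sub_self]
  have hcount : ∀ a ∈ F, (S.count a : k) = (T.count a : k) := by
    intro a ha
    set e := F.equivFin with he
    set v : Fin F.card → k := fun t => ((e.symm t : F) : k) with hv
    have hvinj : Function.Injective v := by
      intro a b hab
      exact e.symm.injective (Subtype.ext hab)
    set c : Fin F.card → k := fun t => (S.count (v t) : k) - (T.count (v t) : k) with hc
    have hczero : c = 0 := by
      apply Matrix.eq_zero_of_forall_pow_sum_mul_pow_eq_zero hvinj
      intro i
      have h0 := hsum (i : ℕ)
      rw [← Finset.sum_coe_sort] at h0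
      rw [← Equiv.sum_comp e.symm
        (fun a : F => (((S.count (a : k) : k) - (T.count (a : k) : k)) * (a : k) ^ (i : ℕ)))] at h0
      exact h0
    have := congrFun hczero (e ⟨a, ha⟩)
    simp only [hc, hv, Equiv.symm_apply_apply, Pi.zero_apply] at this
    exact sub_eq_zero.mp this
  ext a
  by_cases ha : a ∈ F
  · exact_mod_cast hcount a ha
  · have h1 : a ∉ S.toFinset := fun h' => ha (Finset.mem_union_left _ h')
    have h2 : a ∉ T.toFinset := fun h' => ha (Finset.mem_union_right _ h')
    rw [Multiset.count_eq_zero_of_notMem (by simpa using h1),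
      Multiset.count_eq_zero_of_notMem (by simpa using h2)]



lemma exists_perm_of_map_univ_eq {α : Type*} : ∀ {m : ℕ} (f g : Fin m → α),
    Multiset.map f Finset.univ.val = Multiset.map g Finset.univ.val →
    ∃ σ : Equiv.Perm (Fin m), ∀ i, g i = f (σ i) := by
  intro m
  induction m with
  | zero => exact fun f g _ => ⟨Equiv.refl _, fun i => i.elim0⟩
  | succ m ih =>
    intro f g h
    have hmem : g (Fin.last m) ∈ Multiset.map f Finset.univ.val := by
      rw [h]; exact Multiset.mem_map_of_mem _ (Finset.mem_def.mp (Finset.mem_univ _))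
    obtain ⟨i0, -, hi0⟩ := Multiset.mem_map.mp hmem
    set e : Equiv.Perm (Fin (m + 1)) := Equiv.swap (Fin.last m) i0 with he
    have huval : Multiset.map (⇑e) (Finset.univ.val) = Finset.univ.val := by
      have h2 := congrArg Finset.val (Finset.map_univ_equiv e)
      simpa using h2
    have hfe : Multiset.map (f ∘ e) Finset.univ.val = Multiset.map g Finset.univ.val := by
      rw [← h, ← Multiset.map_map, huval]
    have huniv : (Finset.univ.val : Multiset (Fin (m + 1)))
        = Fin.last m ::ₘ Multiset.map Fin.castSucc Finset.univ.val := by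
      rw [Fin.univ_castSuccEmb, Finset.cons_val, Finset.map_val]
      rfl
    rw [huniv, Multiset.map_cons, Multiset.map_cons, Multiset.map_map, Multiset.map_map] at hfe
    have hlast : (f ∘ e) (Fin.last m) = g (Fin.last m) := by
      simp [he, Equiv.swap_apply_left, hi0]
    rw [hlast] at hfe
    have htails := Multiset.cons_inj_right (g (Fin.last m)) |>.mp hfe
    obtain ⟨σ', hσ'⟩ := ih ((f ∘ e) ∘ Fin.castSucc) (g ∘ Fin.castSucc) htails
    refine ⟨(finSuccEquivLast.trans ((Equiv.optionCongr σ').trans finSuccEquivLast.symm)).trans e,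
      fun i => ?_⟩
    induction i using Fin.lastCases with
    | last =>
      simpa using hlast.symm
    | cast j =>
      have := hσ' j
      simpa using this


/-- Super power sums `p_{m,n,s}(x,y) = ∑ x_i^s - ∑ y_j^s` over a field
of characteristic zero: if two pairs of tuples (with all entries of `x`, `y` nonzero and
with `x_i ≠ y_j`, `x'_i ≠ y'_j` for all indices) have equal super power sums for all
`s ≥ 0`, then `m = m'`, `n = n'`, and `(x', y')` is obtained from `(x, y)` by permuting
the entries of `x` and of `y`. -/
theorem super_power_sums_determine_tuples {k : Type*} [Field k] [CharZero k]
    {m n m' n' : ℕ} (x : Fin m → k) (y : Fin n → k) (x' : Fin m' → k) (y' : Fin n' → k)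
    (hp : ∀ s : ℕ, (∑ i, x i ^ s) - (∑ j, y j ^ s) = (∑ i, x' i ^ s) - (∑ j, y' j ^ s))
    (hx : ∀ i, x i ≠ 0) (hy : ∀ j, y j ≠ 0)
    (hxy : ∀ i j, x i ≠ y j) (hxy' : ∀ i j, x' i ≠ y' j) :
    m = m' ∧ n = n' ∧
      (∃ σ : Fin m' ≃ Fin m, ∀ i, x' i = x (σ i)) ∧
      (∃ τ : Fin n' ≃ Fin n, ∀ j, y' j = y (τ j)) := by
  classical
  set X : Multiset k := Finset.univ.val.map x with hXdef
  set Y : Multiset k := Finset.univ.val.map y with hYdef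
  set X' : Multiset k := Finset.univ.val.map x' with hX'def
  set Y' : Multiset k := Finset.univ.val.map y' with hY'def
  have key : X + Y' = X' + Y := by
    apply multiset_eq_of_powersum_eq
    intro s
    have hps := hp s
    have e1 : ((X + Y').map (· ^ s)).sum = (∑ i, x i ^ s) + (∑ j, y' j ^ s) := by
      rw [Multiset.map_add, Multiset.sum_add, hXdef, hY'def,
        Multiset.map_map, Multiset.map_map]
      rfl
    have e2 : ((X' + Y).map (· ^ s)).sum = (∑ i, x' i ^ s) + (∑ j, y j ^ s) := by
      rw [Multiset.map_add, Multiset.sum_add, hX'def, hYdef,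
        Multiset.map_map, Multiset.map_map]
      rfl
    rw [e1, e2]
    linear_combination hps
  have hcnt : ∀ a : k, X.count a + Y'.count a = X'.count a + Y.count a := by
    intro a
    rw [← Multiset.count_add, ← Multiset.count_add, key]
  have hX : X = X' := by
    ext a
    by_cases h1 : a ∈ X
    · obtain ⟨i, -, hi⟩ := Multiset.mem_map.mp h1
      have hcY : Y.count a = 0 := by
        rw [Multiset.count_eq_zero]
        intro hmem
        obtain ⟨j, -, hj⟩ := Multiset.mem_map.mp hmem
        exact hxy i j (hi.trans hj.symm)
      have hcY' : Y'.count a = 0 := by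
        by_contra hne
        obtain ⟨j, -, hj⟩ := Multiset.mem_map.mp
          (Multiset.count_pos.mp (Nat.pos_of_ne_zero hne) : a ∈ Y')
        have hXpos : 0 < X.count a := Multiset.count_pos.mpr h1
        have hX'pos : 0 < X'.count a := by have := hcnt a; omega
        obtain ⟨i', -, hi'⟩ := Multiset.mem_map.mp (Multiset.count_pos.mp hX'pos : a ∈ X')
        exact hxy' i' j (hi'.trans hj.symm)
      have := hcnt a
      omega
    · have hcX : X.count a = 0 := Multiset.count_eq_zero_of_notMem h1
      by_cases h2 : a ∈ X'
      · obtain ⟨i', -, hi'⟩ := Multiset.mem_map.mp h2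
        have hcY' : Y'.count a = 0 := by
          rw [Multiset.count_eq_zero]
          intro hmem
          obtain ⟨j, -, hj⟩ := Multiset.mem_map.mp hmem
          exact hxy' i' j (hi'.trans hj.symm)
        have hX'pos : 0 < X'.count a := Multiset.count_pos.mpr h2
        have := hcnt a
        omega
      · rw [hcX, Multiset.count_eq_zero_of_notMem h2]
  have hYY : Y' = Y := by
    rw [hX] at key
    exact add_left_cancel key
  have hm : m = m' := by
    have := congrArg Multiset.card hX
    simpa [hXdef, hX'def] using this
  have hn : n = n' := by
    have := congrArg Multiset.card hYY
    simpa [hYdef, hY'def] using this.symm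
  subst hm
  subst hn
  obtain ⟨σ, hσ⟩ := exists_perm_of_map_univ_eq x x' hX
  obtain ⟨τ, hτ⟩ := exists_perm_of_map_univ_eq y y' hYY.symm
  exact ⟨rfl, rfl, ⟨σ, hσ⟩, ⟨τ, hτ⟩⟩
end

section
/- Fix a finite set and subsets F, G, L with F ∪ G ⊆ L. Then, as polynomials in q with integer coefficients, ∑_{H ⊇ F, I ⊇ G, H ∪ I = L} q^{|H| + |I| − |F| − |G|} = (1+q)^{|F Δ G|} · (2q + q²)^{|L ∖ (F ∪ G)|}, where the sum is over all pairs of sets (H, I) with F ⊆ H, G ⊆ I, and H ∪ I = L, and F Δ G := (F ∪ G) ∖ (F ∩ G) denotes the symmetric difference. -/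
open Finset Polynomial

lemma sum_pairs_union_eq_prod {α : Type*} [DecidableEq α] {R : Type*} [CommRing R]
    (L : Finset α) (f₁ f₂ f₃ : α → R) :
    ∑ p ∈ (L.powerset ×ˢ L.powerset).filter (fun p => p.1 ∪ p.2 = L),
      (∏ x ∈ p.1 ∩ p.2, f₁ x) * (∏ x ∈ p.1 \ p.2, f₂ x) * (∏ x ∈ p.2 \ p.1, f₃ x)
    = ∏ x ∈ L, (f₁ x + f₂ x + f₃ x) := by
  rw [Finset.sum_filter, Finset.sum_product]
  have inner : ∀ H ∈ L.powerset,
      (∑ I ∈ L.powerset, if H ∪ I = L then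
        (∏ x ∈ H ∩ I, f₁ x) * (∏ x ∈ H \ I, f₂ x) * (∏ x ∈ I \ H, f₃ x) else 0)
      = (∏ x ∈ H, (f₁ x + f₂ x)) * ∏ x ∈ L \ H, f₃ x := by
    intro H hH
    rw [Finset.mem_powerset] at hH
    rw [← Finset.sum_filter]
    have hb : (∑ I ∈ L.powerset.filter (fun I => H ∪ I = L),
        (∏ x ∈ H ∩ I, f₁ x) * (∏ x ∈ H \ I, f₂ x) * (∏ x ∈ I \ H, f₃ x))
        = ∑ u ∈ H.powerset, ((∏ x ∈ u, f₁ x) * (∏ x ∈ H \ u, f₂ x)) * ∏ x ∈ L \ H, f₃ x := by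
      refine Finset.sum_nbij' (fun I => I ∩ H) (fun u => (L \ H) ∪ u) ?_ ?_ ?_ ?_ ?_
      · intro I hI
        simp only [Finset.mem_powerset]
        exact Finset.inter_subset_right
      · intro u hu
        rw [Finset.mem_powerset] at hu
        simp only [Finset.mem_filter, Finset.mem_powerset]
        constructor
        · exact Finset.union_subset (Finset.sdiff_subset) (hu.trans hH)
        · ext a
          simp only [Finset.mem_union, Finset.mem_sdiff]
          constructor
          · rintro (h | (⟨h, -⟩ | h)); exact hH h; exact h; exact hH (hu h)
          · intro ha; by_cases hh : a ∈ H
            · exact Or.inl hh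
            · exact Or.inr (Or.inl ⟨ha, hh⟩)
      · intro I hI
        simp only [Finset.mem_filter, Finset.mem_powerset] at hI
        obtain ⟨hIL, hHI⟩ := hI
        ext a
        have hm : a ∈ H ∪ I ↔ a ∈ L := by rw [hHI]
        simp only [Finset.mem_union] at hm
        simp only [Finset.mem_union, Finset.mem_sdiff, Finset.mem_inter]
        constructor
        · rintro (⟨ha, hh⟩ | ⟨ha, -⟩)
          · rcases hm.2 ha with hcase | hcase; exact absurd hcase hh; exact hcase
          · exact ha
        · intro ha
          by_cases hh : a ∈ H
          · exact Or.inr ⟨ha, hh⟩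
          · exact Or.inl ⟨hIL ha, hh⟩
      · intro u hu
        rw [Finset.mem_powerset] at hu
        ext a
        simp only [Finset.mem_inter, Finset.mem_union, Finset.mem_sdiff]
        constructor
        · rintro ⟨⟨-, hh⟩ | ha, hh'⟩; exact absurd hh' hh; exact ha
        · intro ha; exact ⟨Or.inr ha, hu ha⟩
      · intro I hI
        simp only [Finset.mem_filter, Finset.mem_powerset] at hI
        obtain ⟨hIL, hHI⟩ := hI
        have hm : ∀ a, a ∈ H ∨ a ∈ I ↔ a ∈ L := by
          intro a
          rw [← Finset.mem_union, hHI]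
        have h2 : H \ (I ∩ H) = H \ I := by
          ext a; simp only [Finset.mem_sdiff, Finset.mem_inter]; tauto
        have h3 : I \ H = L \ H := by
          ext a
          simp only [Finset.mem_sdiff]
          constructor
          · rintro ⟨ha, hh⟩; exact ⟨hIL ha, hh⟩
          · rintro ⟨ha, hh⟩
            rcases (hm a).2 ha with hcase | hcase
            · exact absurd hcase hh
            · exact ⟨hcase, hh⟩
        rw [Finset.inter_comm H I, h2, h3]
    rw [hb, ← Finset.sum_mul, ← Finset.prod_add f₁ f₂ H]
  calc (∑ H ∈ L.powerset, ∑ I ∈ L.powerset, if H ∪ I = L then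
        (∏ x ∈ H ∩ I, f₁ x) * (∏ x ∈ H \ I, f₂ x) * (∏ x ∈ I \ H, f₃ x) else 0)
      = ∑ H ∈ L.powerset, (∏ x ∈ H, (f₁ x + f₂ x)) * ∏ x ∈ L \ H, f₃ x :=
        Finset.sum_congr rfl inner
    _ = ∏ x ∈ L, (f₁ x + f₂ x + f₃ x) := (Finset.prod_add (fun x => f₁ x + f₂ x) f₃ L).symm


/-- For finite sets `F, G, L` with `F ∪ G ⊆ L`, as polynomials in `q`
with integer coefficients:
`∑_{H ⊇ F, I ⊇ G, H ∪ I = L} q^(|H| + |I| - |F| - |G|)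
  = (1+q)^|F Δ G| · (2q + q²)^|L ∖ (F ∪ G)|`. -/
theorem sum_q_pow_union_eq {α : Type*} [DecidableEq α] (F G L : Finset α)
    (h : F ∪ G ⊆ L) :
    ∑ p ∈ (L.powerset ×ˢ L.powerset).filter
        (fun p => F ⊆ p.1 ∧ G ⊆ p.2 ∧ p.1 ∪ p.2 = L),
      (Polynomial.X : Polynomial ℤ) ^ ((p.1.card - F.card) + (p.2.card - G.card)) =
    (1 + Polynomial.X) ^ (((F ∪ G) \ (F ∩ G)).card) *
      (2 * Polynomial.X + Polynomial.X ^ 2) ^ ((L \ (F ∪ G)).card) := by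
  set eF : α → ℕ := fun x => if x ∈ F then 0 else 1 with heF
  set eG : α → ℕ := fun x => if x ∈ G then 0 else 1 with heG
  set f₁ : α → Polynomial ℤ := fun x => X ^ (eF x + eG x) with hf₁
  set f₂ : α → Polynomial ℤ := fun x => (if x ∈ G then 0 else 1) * X ^ eF x with hf₂
  set f₃ : α → Polynomial ℤ := fun x => (if x ∈ F then 0 else 1) * X ^ eG x with hf₃
  have hset : (L.powerset ×ˢ L.powerset).filter
        (fun p => F ⊆ p.1 ∧ G ⊆ p.2 ∧ p.1 ∪ p.2 = L)
      = ((L.powerset ×ˢ L.powerset).filter (fun p => p.1 ∪ p.2 = L)).filter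
        (fun p => F ⊆ p.1 ∧ G ⊆ p.2) := by
    rw [Finset.filter_filter]
    apply Finset.filter_congr
    intro p _
    tauto
  rw [hset, Finset.sum_filter]
  have step : ∀ p ∈ (L.powerset ×ˢ L.powerset).filter (fun p => p.1 ∪ p.2 = L),
      (if F ⊆ p.1 ∧ G ⊆ p.2 then
        (X : Polynomial ℤ) ^ ((p.1.card - F.card) + (p.2.card - G.card)) else 0)
      = (∏ x ∈ p.1 ∩ p.2, f₁ x) * (∏ x ∈ p.1 \ p.2, f₂ x) * (∏ x ∈ p.2 \ p.1, f₃ x) := by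
    intro p hp
    simp only [Finset.mem_filter, Finset.mem_product, Finset.mem_powerset] at hp
    obtain ⟨⟨hp1, hp2⟩, hU⟩ := hp
    by_cases hc : F ⊆ p.1 ∧ G ⊆ p.2
    · rw [if_pos hc]
      obtain ⟨hF, hG⟩ := hc
      have cF : ∑ x ∈ p.1, eF x = p.1.card - F.card := by
        rw [← Finset.card_sdiff_of_subset hF, Finset.sdiff_eq_filter, Finset.card_filter]
        exact Finset.sum_congr rfl (fun x _ => by by_cases hx : x ∈ F <;> simp [heF, hx])
      have cG : ∑ x ∈ p.2, eG x = p.2.card - G.card := by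
        rw [← Finset.card_sdiff_of_subset hG, Finset.sdiff_eq_filter, Finset.card_filter]
        exact Finset.sum_congr rfl (fun x _ => by by_cases hx : x ∈ G <;> simp [heG, hx])
      have e2 : ∏ x ∈ p.1 \ p.2, f₂ x = ∏ x ∈ p.1 \ p.2, (X : Polynomial ℤ) ^ eF x := by
        refine Finset.prod_congr rfl (fun x hx => ?_)
        rw [Finset.mem_sdiff] at hx
        have : x ∉ G := fun hxG => hx.2 (hG hxG)
        simp [hf₂, this]
      have e3 : ∏ x ∈ p.2 \ p.1, f₃ x = ∏ x ∈ p.2 \ p.1, (X : Polynomial ℤ) ^ eG x := by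
        refine Finset.prod_congr rfl (fun x hx => ?_)
        rw [Finset.mem_sdiff] at hx
        have : x ∉ F := fun hxF => hx.2 (hF hxF)
        simp [hf₃, this]
      have e1 : ∏ x ∈ p.1 ∩ p.2, f₁ x
          = ((X : Polynomial ℤ) ^ (∑ x ∈ p.1 ∩ p.2, eF x)) *
            X ^ (∑ x ∈ p.1 ∩ p.2, eG x) := by
        rw [← Finset.prod_pow_eq_pow_sum, ← Finset.prod_pow_eq_pow_sum,
          ← Finset.prod_mul_distrib]
        exact Finset.prod_congr rfl (fun x _ => pow_add X (eF x) (eG x))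
      rw [e1, e2, e3, Finset.prod_pow_eq_pow_sum, Finset.prod_pow_eq_pow_sum,
        ← pow_add, ← pow_add, ← pow_add]
      congr 1
      have sF := Finset.sum_inter_add_sum_sdiff p.1 p.2 eF
      have sG := Finset.sum_inter_add_sum_sdiff p.2 p.1 eG
      rw [Finset.inter_comm p.2 p.1] at sG
      rw [← cF, ← cG, ← sF, ← sG]
      ring
    · rw [if_neg hc]
      by_cases hA : F ⊆ p.1
      · have hB : ¬ G ⊆ p.2 := fun hB => hc ⟨hA, hB⟩
        obtain ⟨x, hxG, hxP⟩ := Finset.not_subset.mp hB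
        have hxL : x ∈ L := h (Finset.mem_union_right _ hxG)
        have hx1 : x ∈ p.1 := by
          have : x ∈ p.1 ∪ p.2 := hU ▸ hxL
          rcases Finset.mem_union.mp this with h' | h'
          · exact h'
          · exact absurd h' hxP
        have hz : ∏ x ∈ p.1 \ p.2, f₂ x = 0 :=
          Finset.prod_eq_zero (Finset.mem_sdiff.mpr ⟨hx1, hxP⟩) (by simp [hf₂, hxG])
        rw [hz, mul_zero, zero_mul]
      · obtain ⟨x, hxF, hxP⟩ := Finset.not_subset.mp hA
        have hxL : x ∈ L := h (Finset.mem_union_left _ hxF)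
        have hx2 : x ∈ p.2 := by
          have : x ∈ p.1 ∪ p.2 := hU ▸ hxL
          rcases Finset.mem_union.mp this with h' | h'
          · exact absurd h' hxP
          · exact h'
        have hz : ∏ x ∈ p.2 \ p.1, f₃ x = 0 :=
          Finset.prod_eq_zero (Finset.mem_sdiff.mpr ⟨hx2, hxP⟩) (by simp [hf₃, hxF])
        rw [hz, mul_zero]
  rw [Finset.sum_congr rfl step, sum_pairs_union_eq_prod L f₁ f₂ f₃]
  -- evaluate the product
  have hL : L = (F ∪ G) ∪ (L \ (F ∪ G)) := (Finset.union_sdiff_of_subset h).symm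
  have hFG : F ∪ G = (F ∩ G) ∪ ((F ∪ G) \ (F ∩ G)) :=
    (Finset.union_sdiff_of_subset (Finset.inter_subset_union)).symm
  conv_lhs => rw [hL, Finset.prod_union Finset.disjoint_sdiff]
  have cU : ∏ x ∈ F ∪ G, (f₁ x + f₂ x + f₃ x)
      = (∏ x ∈ F ∩ G, (f₁ x + f₂ x + f₃ x)) *
        ∏ x ∈ (F ∪ G) \ (F ∩ G), (f₁ x + f₂ x + f₃ x) := by
    conv_lhs => rw [hFG]
    exact Finset.prod_union Finset.disjoint_sdiff
  have c1 : ∏ x ∈ F ∩ G, (f₁ x + f₂ x + f₃ x) = 1 := by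
    rw [Finset.prod_congr rfl (fun x hx => ?_), Finset.prod_const_one]
    rw [Finset.mem_inter] at hx
    simp [hf₁, hf₂, hf₃, heF, heG, hx.1, hx.2]
  have c2 : ∏ x ∈ (F ∪ G) \ (F ∩ G), (f₁ x + f₂ x + f₃ x)
      = (1 + X) ^ ((F ∪ G) \ (F ∩ G)).card := by
    rw [Finset.prod_congr rfl (fun x hx => ?_), Finset.prod_const]
    simp only [Finset.mem_sdiff, Finset.mem_union, Finset.mem_inter, not_and] at hx
    rcases hx.1 with hxF | hxG
    · have hxG : x ∉ G := hx.2 hxF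
      simp only [hf₁, hf₂, hf₃, heF, heG, if_pos hxF, if_neg hxG]
      ring
    · by_cases hxF : x ∈ F
      · have := hx.2 hxF
        simp only [hf₁, hf₂, hf₃, heF, heG, if_pos hxF, if_neg this]
        ring
      · simp only [hf₁, hf₂, hf₃, heF, heG, if_pos hxG, if_neg hxF]
        ring
  have c3 : ∏ x ∈ L \ (F ∪ G), (f₁ x + f₂ x + f₃ x)
      = (2 * X + X ^ 2) ^ (L \ (F ∪ G)).card := by
    rw [Finset.prod_congr rfl (fun x hx => ?_), Finset.prod_const]
    simp only [Finset.mem_sdiff, Finset.mem_union] at hx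
    push_neg at hx
    simp only [hf₁, hf₂, hf₃, heF, heG, if_neg hx.2.1, if_neg hx.2.2]
    ring
  rw [cU, c1, c2, c3, one_mul]
end

section
/- Let M be a loopless matroid on a finite ground set and let E_q(M) be the free ℤ[q,q^{-1}]-module on the basis {ε_F : F ∈ L(M)} equipped with the ℤ[q,q^{-1}]-bilinear multiplication ε_F · ε_G := ∑_{H ≥ I ≥ F∨G} μ(I,H) q^{crk I} ε_H, where the sum is over pairs of flats I ≤ H with I ≥ F∨G, μ is the Möbius function of L(M), and crk I := rk M − rk I. Then this multiplication is commutative and associative, and the element ∑_{F ≤ G} μ(F,G) q^{−crk F} ε_G (summing over pairs of flats F ≤ G) is a two-sided unit for it. -/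
open scoped Classical

namespace FinMatroid

/-- The index type for the standard basis of the Möbius algebra: the flats of `M`. -/
def FlatIdx (M : FinMatroid) : Type := {F : Finset M.E // M.IsFlat F}

noncomputable instance (M : FinMatroid) : Fintype M.FlatIdx :=
  Subtype.fintype _

instance (M : FinMatroid) : DecidableEq M.FlatIdx :=
  Subtype.instDecidableEq

/-- The structure constant of the `q`-deformed Möbius algebra `E_q(M)`: the coefficient
of `ε_H` in `ε_F · ε_G` is `∑_{H ≥ I ≥ F ∨ G} μ(I, H) q^(crk I)`, where the sum ranges
over flats `I` with `F ∪ G ⊆ I ⊆ H` (for a flat `I`, containing `F ∪ G` is the same as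
lying above the join `F ∨ G`) and `crk I = rk M - rk I`. -/
noncomputable def structConst (M : FinMatroid) (F G H : M.FlatIdx) :
    LaurentPolynomial ℤ :=
  ∑ I ∈ Finset.univ.filter (fun I : M.FlatIdx => F.1 ∪ G.1 ⊆ I.1 ∧ I.1 ⊆ H.1),
    LaurentPolynomial.C (M.mu I.1 H.1) *
      LaurentPolynomial.T ((M.rank : ℤ) - M.rk I.1)

/-- The multiplication of the `q`-deformed Möbius algebra `E_q(M)`, the free
`ℤ[q,q⁻¹]`-module on the flats of `M` (elements are coefficient functions): the
`ℤ[q,q⁻¹]`-bilinear extension of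
`ε_F · ε_G = ∑_{H ≥ I ≥ F∨G} μ(I,H) q^(crk I) ε_H`. -/
noncomputable def emul (M : FinMatroid)
    (a b : M.FlatIdx → LaurentPolynomial ℤ) : M.FlatIdx → LaurentPolynomial ℤ :=
  fun H => ∑ F : M.FlatIdx, ∑ G : M.FlatIdx, a F * b G * M.structConst F G H

/-- The claimed unit of `E_q(M)`: `∑_{F ≤ G} μ(F,G) q^(-crk F) ε_G`. -/
noncomputable def eunit (M : FinMatroid) : M.FlatIdx → LaurentPolynomial ℤ :=
  fun G => ∑ F ∈ Finset.univ.filter (fun F : M.FlatIdx => F.1 ⊆ G.1),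
    LaurentPolynomial.C (M.mu F.1 G.1) *
      LaurentPolynomial.T (-((M.rank : ℤ) - M.rk F.1))

end FinMatroid


namespace FinMatroid

variable (M : FinMatroid)

lemma mu_self (A : Finset M.E) : M.mu A A = 1 := by
  rw [mu]; simp

lemma mu_of_not_subset {A B : Finset M.E} (h : ¬ A ⊆ B) : M.mu A B = 0 := by
  have hne : A ≠ B := fun hh => h (hh ▸ Finset.Subset.refl A)
  rw [mu, if_neg hne]
  have he : M.flats.filter (fun G => A ⊆ G ∧ G ⊂ B) = ∅ := by
    rw [Finset.filter_eq_empty_iff]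
    intro G _
    rintro ⟨hAG, hGB⟩
    exact h (hAG.trans hGB.subset)
  rw [he]
  simp

lemma sum_flatIdx {β : Type*} [AddCommMonoid β] (f : Finset M.E → β) :
    ∑ G : M.FlatIdx, f G.1 = ∑ G ∈ M.flats, f G := by
  refine Finset.sum_bij' (fun (G : M.FlatIdx) (_ : G ∈ Finset.univ) => G.1)
    (fun G hG => (⟨G, by simpa [flats] using hG⟩ : M.FlatIdx)) ?_ ?_ ?_ ?_ ?_
  · intro G _; simp [flats, G.2]
  · intro G _; exact Finset.mem_univ _
  · intro G _; rfl
  · intro G _; rfl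
  · intro G _; rfl

/-- Bottom Möbius recursion: `∑_{A ⊆ G ⊆ B} μ(A,G) = δ_{A,B}` over flats. -/
lemma mu_sum_interval (A B : M.FlatIdx) :
    ∑ G : M.FlatIdx, (if A.1 ⊆ G.1 ∧ G.1 ⊆ B.1 then M.mu A.1 G.1 else 0)
      = if A = B then 1 else 0 := by
  rw [M.sum_flatIdx (fun G => if A.1 ⊆ G ∧ G ⊆ B.1 then M.mu A.1 G else 0)]
  by_cases hAB : A.1 ⊆ B.1
  · by_cases hEq : A = B
    · subst hEq
      rw [if_pos rfl]
      have hterm : ∀ G ∈ M.flats, (if A.1 ⊆ G ∧ G ⊆ A.1 then M.mu A.1 G else 0)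
          = if G = A.1 then M.mu A.1 G else 0 := by
        intro G _
        refine if_congr ⟨fun h => Finset.Subset.antisymm h.2 h.1, ?_⟩ rfl rfl
        rintro rfl; exact ⟨Finset.Subset.refl _, Finset.Subset.refl _⟩
      rw [Finset.sum_congr rfl hterm, Finset.sum_ite_eq' M.flats A.1]
      have hAf : A.1 ∈ M.flats := by simp [flats, A.2]
      rw [if_pos hAf, M.mu_self]
    · rw [if_neg hEq]
      have hne : A.1 ≠ B.1 := fun h => hEq (Subtype.ext h)
      have hterm : ∀ G ∈ M.flats, (if A.1 ⊆ G ∧ G ⊆ B.1 then M.mu A.1 G else 0)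
          = (if A.1 ⊆ G ∧ G ⊂ B.1 then M.mu A.1 G else 0)
            + (if G = B.1 then M.mu A.1 G else 0) := by
        intro G _
        by_cases hGB : G = B.1
        · subst hGB
          rw [if_pos ⟨hAB, Finset.Subset.refl _⟩, if_pos rfl,
            if_neg (fun h => (Finset.ssubset_iff_subset_ne.mp h.2).2 rfl), zero_add]
        · rw [if_neg hGB, add_zero]
          refine if_congr (and_congr_right fun _ => ?_) rfl rfl
          exact ⟨fun h => Finset.ssubset_iff_subset_ne.mpr ⟨h, hGB⟩, fun h => h.subset⟩
      rw [Finset.sum_congr rfl hterm, Finset.sum_add_distrib,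
        Finset.sum_ite_eq' M.flats B.1]
      have hBf : B.1 ∈ M.flats := by simp [flats, B.2]
      rw [if_pos hBf]
      have hmu : M.mu A.1 B.1
          = -∑ G ∈ M.flats, (if A.1 ⊆ G ∧ G ⊂ B.1 then M.mu A.1 G else 0) := by
        rw [mu, if_neg hne, Finset.sum_attach]
        congr 1
        rw [Finset.sum_filter]
      rw [hmu]
      ring
  · have hEq : A ≠ B := fun h => hAB (h ▸ Finset.Subset.refl _)
    rw [if_neg hEq]
    apply Finset.sum_eq_zero
    intro G _
    rw [if_neg]
    rintro ⟨h1, h2⟩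
    exact hAB (h1.trans h2)

/-- Top Möbius recursion, from matrix inversion. -/
lemma mu_sum_interval' (F B : M.FlatIdx) :
    ∑ I : M.FlatIdx, (if F.1 ⊆ I.1 then M.mu I.1 B.1 else 0)
      = if F = B then 1 else 0 := by
  classical
  set Z : Matrix M.FlatIdx M.FlatIdx ℤ :=
    Matrix.of (fun A B : M.FlatIdx => if A.1 ⊆ B.1 then (1 : ℤ) else 0) with hZ
  set Mu : Matrix M.FlatIdx M.FlatIdx ℤ :=
    Matrix.of (fun A B : M.FlatIdx => M.mu A.1 B.1) with hMu
  have h1 : Mu * Z = 1 := by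
    ext A B
    simp only [Matrix.mul_apply, Matrix.one_apply, hMu, hZ, Matrix.of_apply]
    have hterm : ∀ I : M.FlatIdx,
        M.mu A.1 I.1 * (if I.1 ⊆ B.1 then (1 : ℤ) else 0)
          = if A.1 ⊆ I.1 ∧ I.1 ⊆ B.1 then M.mu A.1 I.1 else 0 := by
      intro I
      by_cases h : I.1 ⊆ B.1
      · by_cases h2 : A.1 ⊆ I.1 <;> simp [h, h2, M.mu_of_not_subset]
      · simp [h]
    rw [Finset.sum_congr rfl (fun I _ => hterm I), M.mu_sum_interval]
  have h2 : Z * Mu = 1 := mul_eq_one_comm.mp h1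
  have h3 : (Z * Mu) F B = (1 : Matrix M.FlatIdx M.FlatIdx ℤ) F B := by rw [h2]
  simp only [Matrix.mul_apply, Matrix.one_apply, hMu, hZ, Matrix.of_apply,
    ite_mul, one_mul, zero_mul] at h3
  exact h3

/-- The zeta transform on coefficient vectors. -/
noncomputable def psi (M : FinMatroid) (a : M.FlatIdx → LaurentPolynomial ℤ)
    (J : M.FlatIdx) : LaurentPolynomial ℤ :=
  ∑ F : M.FlatIdx, (if F.1 ⊆ J.1 then a F else 0)

lemma phi_psi (a : M.FlatIdx → LaurentPolynomial ℤ) (H : M.FlatIdx) :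
    ∑ I : M.FlatIdx, LaurentPolynomial.C (M.mu I.1 H.1) * M.psi a I = a H := by
  unfold psi
  simp only [Finset.mul_sum, mul_ite, mul_zero]
  rw [Finset.sum_comm]
  have hF : ∀ F : M.FlatIdx,
      (∑ I : M.FlatIdx, if F.1 ⊆ I.1 then LaurentPolynomial.C (M.mu I.1 H.1) * a F else 0)
        = (if F = H then a F else 0) := by
    intro F
    have : ∀ I : M.FlatIdx,
        (if F.1 ⊆ I.1 then LaurentPolynomial.C (M.mu I.1 H.1) * a F else 0)
          = (LaurentPolynomial.C (if F.1 ⊆ I.1 then M.mu I.1 H.1 else 0)) * a F := by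
      intro I
      by_cases h : F.1 ⊆ I.1 <;> simp [h]
    rw [Finset.sum_congr rfl (fun I _ => this I), ← Finset.sum_mul, ← map_sum,
      M.mu_sum_interval']
    by_cases h : F = H <;> simp [h]
  rw [Finset.sum_congr rfl (fun F _ => hF F), Finset.sum_ite_eq' Finset.univ H]
  simp

lemma psi_injective : Function.Injective M.psi := by
  intro a b h
  funext H
  rw [← M.phi_psi a H, ← M.phi_psi b H, h]

lemma sum_structConst (F G J : M.FlatIdx) :
    ∑ H : M.FlatIdx, (if H.1 ⊆ J.1 then M.structConst F G H else 0)
      = if F.1 ∪ G.1 ⊆ J.1 then LaurentPolynomial.T ((M.rank : ℤ) - M.rk J.1) else 0 := by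
  unfold structConst
  simp only [Finset.sum_filter]
  have push : ∀ H : M.FlatIdx,
      (if H.1 ⊆ J.1 then
          ∑ I : M.FlatIdx, (if F.1 ∪ G.1 ⊆ I.1 ∧ I.1 ⊆ H.1 then
            LaurentPolynomial.C (M.mu I.1 H.1) * LaurentPolynomial.T ((M.rank : ℤ) - M.rk I.1)
            else 0)
        else 0)
      = ∑ I : M.FlatIdx, (if (F.1 ∪ G.1 ⊆ I.1) ∧ (I.1 ⊆ H.1 ∧ H.1 ⊆ J.1) then
          LaurentPolynomial.C (M.mu I.1 H.1) * LaurentPolynomial.T ((M.rank : ℤ) - M.rk I.1)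
          else 0) := by
    intro H
    by_cases h : H.1 ⊆ J.1
    · simp [h, and_assoc]
    · simp [h]
  rw [Finset.sum_congr rfl (fun H _ => push H), Finset.sum_comm]
  have hI : ∀ I : M.FlatIdx,
      (∑ H : M.FlatIdx, (if (F.1 ∪ G.1 ⊆ I.1) ∧ (I.1 ⊆ H.1 ∧ H.1 ⊆ J.1) then
          LaurentPolynomial.C (M.mu I.1 H.1) * LaurentPolynomial.T ((M.rank : ℤ) - M.rk I.1)
          else 0))
      = (if I = J then (if F.1 ∪ G.1 ⊆ J.1 then
          LaurentPolynomial.T ((M.rank : ℤ) - M.rk J.1) else 0) else 0) := by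
    intro I
    by_cases hFG : F.1 ∪ G.1 ⊆ I.1
    · simp only [hFG, true_and]
      have : ∀ H : M.FlatIdx,
          (if I.1 ⊆ H.1 ∧ H.1 ⊆ J.1 then
            LaurentPolynomial.C (M.mu I.1 H.1) * LaurentPolynomial.T ((M.rank : ℤ) - M.rk I.1)
            else 0)
          = (LaurentPolynomial.C (if I.1 ⊆ H.1 ∧ H.1 ⊆ J.1 then M.mu I.1 H.1 else 0)) *
              LaurentPolynomial.T ((M.rank : ℤ) - M.rk I.1) := by
        intro H
        by_cases h : I.1 ⊆ H.1 ∧ H.1 ⊆ J.1 <;> simp [h]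
      rw [Finset.sum_congr rfl (fun H _ => this H), ← Finset.sum_mul, ← map_sum,
        M.mu_sum_interval]
      by_cases h : I = J
      · subst h
        simp [hFG]
      · simp [h]
    · simp only [hFG, false_and, if_false, Finset.sum_const_zero]
      by_cases h : I = J
      · subst h
        simp [hFG]
      · simp [h]
  rw [Finset.sum_congr rfl (fun I _ => hI I), Finset.sum_ite_eq' Finset.univ J]
  simp

lemma psi_emul (a b : M.FlatIdx → LaurentPolynomial ℤ) (J : M.FlatIdx) :
    M.psi (M.emul a b) J
      = LaurentPolynomial.T ((M.rank : ℤ) - M.rk J.1) * M.psi a J * M.psi b J := by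
  unfold psi emul
  have push : ∀ H : M.FlatIdx,
      (if H.1 ⊆ J.1 then
          ∑ F : M.FlatIdx, ∑ G : M.FlatIdx, a F * b G * M.structConst F G H
        else 0)
      = ∑ F : M.FlatIdx, ∑ G : M.FlatIdx,
          a F * b G * (if H.1 ⊆ J.1 then M.structConst F G H else 0) := by
    intro H
    by_cases h : H.1 ⊆ J.1 <;> simp [h]
  rw [Finset.sum_congr rfl (fun H _ => push H), Finset.sum_comm]
  have swap2 : ∀ F : M.FlatIdx,
      (∑ H : M.FlatIdx, ∑ G : M.FlatIdx,
          a F * b G * (if H.1 ⊆ J.1 then M.structConst F G H else 0))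
      = ∑ G : M.FlatIdx, a F * b G *
          (if F.1 ∪ G.1 ⊆ J.1 then LaurentPolynomial.T ((M.rank : ℤ) - M.rk J.1) else 0) := by
    intro F
    rw [Finset.sum_comm]
    refine Finset.sum_congr rfl (fun G _ => ?_)
    rw [← Finset.mul_sum, M.sum_structConst]
  rw [Finset.sum_congr rfl (fun F _ => swap2 F)]
  rw [mul_assoc, Finset.sum_mul_sum, Finset.mul_sum]
  refine Finset.sum_congr rfl (fun F _ => ?_)
  rw [Finset.mul_sum]
  refine Finset.sum_congr rfl (fun G _ => ?_)
  by_cases hF : F.1 ⊆ J.1 <;> by_cases hG : G.1 ⊆ J.1 <;>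
    simp [hF, hG, Finset.union_subset_iff] <;> ring

lemma psi_eunit (J : M.FlatIdx) :
    M.psi M.eunit J = LaurentPolynomial.T (-((M.rank : ℤ) - M.rk J.1)) := by
  unfold psi eunit
  simp only [Finset.sum_filter]
  have push : ∀ G : M.FlatIdx,
      (if G.1 ⊆ J.1 then
          ∑ F : M.FlatIdx, (if F.1 ⊆ G.1 then
            LaurentPolynomial.C (M.mu F.1 G.1) *
              LaurentPolynomial.T (-((M.rank : ℤ) - M.rk F.1)) else 0)
        else 0)
      = ∑ F : M.FlatIdx, (if F.1 ⊆ G.1 ∧ G.1 ⊆ J.1 then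
          LaurentPolynomial.C (M.mu F.1 G.1) *
            LaurentPolynomial.T (-((M.rank : ℤ) - M.rk F.1)) else 0) := by
    intro G
    by_cases h : G.1 ⊆ J.1
    · simp only [h, if_true, and_true]
    · simp [h]
  rw [Finset.sum_congr rfl (fun G _ => push G), Finset.sum_comm]
  have hF : ∀ F : M.FlatIdx,
      (∑ G : M.FlatIdx, (if F.1 ⊆ G.1 ∧ G.1 ⊆ J.1 then
          LaurentPolynomial.C (M.mu F.1 G.1) *
            LaurentPolynomial.T (-((M.rank : ℤ) - M.rk F.1)) else 0))
      = (if F = J then LaurentPolynomial.T (-((M.rank : ℤ) - M.rk J.1)) else 0) := by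
    intro F
    have : ∀ G : M.FlatIdx,
        (if F.1 ⊆ G.1 ∧ G.1 ⊆ J.1 then
          LaurentPolynomial.C (M.mu F.1 G.1) *
            LaurentPolynomial.T (-((M.rank : ℤ) - M.rk F.1)) else 0)
        = (LaurentPolynomial.C (if F.1 ⊆ G.1 ∧ G.1 ⊆ J.1 then M.mu F.1 G.1 else 0)) *
            LaurentPolynomial.T (-((M.rank : ℤ) - M.rk F.1)) := by
      intro G
      by_cases h : F.1 ⊆ G.1 ∧ G.1 ⊆ J.1 <;> simp [h]
    rw [Finset.sum_congr rfl (fun G _ => this G), ← Finset.sum_mul, ← map_sum,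
      M.mu_sum_interval]
    by_cases h : F = J
    · subst h; simp
    · simp [h]
  rw [Finset.sum_congr rfl (fun F _ => hF F), Finset.sum_ite_eq' Finset.univ J]
  simp

lemma structConst_comm (F G H : M.FlatIdx) :
    M.structConst F G H = M.structConst G F H := by
  unfold structConst
  simp only [Finset.union_comm F.1 G.1]

lemma emul_comm (a b : M.FlatIdx → LaurentPolynomial ℤ) : M.emul a b = M.emul b a := by
  funext H
  show (∑ F : M.FlatIdx, ∑ G : M.FlatIdx, a F * b G * M.structConst F G H)
      = ∑ F : M.FlatIdx, ∑ G : M.FlatIdx, b F * a G * M.structConst F G H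
  rw [Finset.sum_comm]
  refine Finset.sum_congr rfl (fun F _ => Finset.sum_congr rfl (fun G _ => ?_))
  rw [M.structConst_comm]
  ring

end FinMatroid

/-- For a loopless matroid `M`, the multiplication of the
`q`-deformed Möbius algebra `E_q(M)` is commutative and associative, and
`∑_{F ≤ G} μ(F,G) q^(-crk F) ε_G` is a two-sided unit for it. -/
theorem deformed_moebius_algebra (M : FinMatroid) (hM : M.Loopless) :
    (∀ a b : M.FlatIdx → LaurentPolynomial ℤ, M.emul a b = M.emul b a) ∧
    (∀ a b c : M.FlatIdx → LaurentPolynomial ℤ,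
      M.emul (M.emul a b) c = M.emul a (M.emul b c)) ∧
    (∀ a : M.FlatIdx → LaurentPolynomial ℤ,
      M.emul M.eunit a = a ∧ M.emul a M.eunit = a) := by
  refine ⟨M.emul_comm, ?_, ?_⟩
  · intro a b c
    apply M.psi_injective
    funext J
    simp only [M.psi_emul]
    ring
  · intro a
    have hl : M.emul M.eunit a = a := by
      apply M.psi_injective
      funext J
      rw [M.psi_emul, M.psi_eunit, ← LaurentPolynomial.T_add]
      simp
    exact ⟨hl, by rw [M.emul_comm]; exact hl⟩
end

section
/- Let M be the Boolean matroid on the ground set {1,…,n}, so that the flats of M are exactly all subsets of {1,…,n}, and let E_q(M) be its q-deformed Möbius algebra. For each subset F define x_F := ∑_{G ⊇ F} q^{|G| − |F|} ε_G. Then for any subsets F, G ⊆ {1,…,n}, x_F · x_G = ∑_{K ⊇ F ∪ G} q^{n − |K|} (1+q)^{|K| − |F ∩ G|} x_K in E_q(M). -/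
open LaurentPolynomial Finset

namespace BooleanMoebius

/-- The `q`-deformed Möbius algebra of the Boolean matroid on `{1, …, n}`, realized as
the free `ℤ[q,q⁻¹]`-module on the basis `{ε_F : F ⊆ {1,…,n}}` (elements are coefficient
functions).  The multiplication is the bilinear extension of
`ε_H · ε_I = ∑_{K ⊇ J ⊇ H ∪ I} (-1)^(|K ∖ J|) q^(n - |J|) ε_K`,
using the Möbius function `μ(J, K) = (-1)^(|K ∖ J|)` of the Boolean lattice and the
corank `n - |J|`. -/
noncomputable def mul (n : ℕ) (a b : Finset (Fin n) → LaurentPolynomial ℤ) :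
    Finset (Fin n) → LaurentPolynomial ℤ :=
  fun K => ∑ H : Finset (Fin n), ∑ I : Finset (Fin n),
    a H * b I *
      ∑ J ∈ Finset.univ.filter (fun J : Finset (Fin n) => H ∪ I ⊆ J ∧ J ⊆ K),
        LaurentPolynomial.C ((-1 : ℤ) ^ ((K \ J).card)) * T ((n : ℤ) - J.card)

/-- The Kazhdan–Lusztig basis element `x_F = ∑_{G ⊇ F} q^(|G| - |F|) ε_G` of the
`q`-deformed Möbius algebra of the Boolean matroid (every Kazhdan–Lusztig polynomial
of a Boolean matroid equals `1`). -/
noncomputable def x (n : ℕ) (F : Finset (Fin n)) :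
    Finset (Fin n) → LaurentPolynomial ℤ :=
  fun G => if F ⊆ G then T ((G.card : ℤ) - F.card) else 0

end BooleanMoebius

namespace BKL
set_option linter.unusedSectionVars false

variable {α : Type*} [DecidableEq α] [Fintype α]

lemma sum_pow_card {α : Type*} [DecidableEq α] {R : Type*} [CommRing R] (A : Finset α) (a b : R) :
    ∑ S ∈ A.powerset, a ^ S.card * b ^ (A.card - S.card) = (a + b) ^ A.card := by
  rw [← Finset.prod_const, Finset.prod_add]
  refine Finset.sum_congr rfl fun S hS => ?_
  rw [Finset.prod_const, Finset.prod_const, Finset.card_sdiff_of_subset (Finset.mem_powerset.mp hS)]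

lemma sum_T_card (F J : Finset α) (h : F ⊆ J) :
    ∑ H ∈ Finset.univ.filter (fun H : Finset α => F ⊆ H ∧ H ⊆ J),
        (T ((H.card : ℤ) - F.card) : LaurentPolynomial ℤ)
      = ∑ S ∈ (J \ F).powerset, (T 1 : LaurentPolynomial ℤ) ^ S.card * 1 ^ ((J \ F).card - S.card) := by
  refine Finset.sum_nbij' (fun H => H \ F) (fun S => F ∪ S) ?_ ?_ ?_ ?_ ?_
  · intro H hH
    simp only [Finset.mem_filter, Finset.mem_univ, true_and] at hH
    exact Finset.mem_powerset.mpr (Finset.sdiff_subset_sdiff hH.2 le_rfl)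
  · intro S hS
    simp only [Finset.mem_powerset] at hS
    simp only [Finset.mem_filter, Finset.mem_univ, true_and]
    exact ⟨Finset.subset_union_left, Finset.union_subset h (hS.trans Finset.sdiff_subset)⟩
  · intro H hH
    simp only [Finset.mem_filter, Finset.mem_univ, true_and] at hH
    exact Finset.union_sdiff_of_subset hH.1
  · intro S hS
    simp only [Finset.mem_powerset] at hS
    exact Finset.union_sdiff_cancel_left (Finset.disjoint_sdiff.mono_right hS)
  · intro H hH
    simp only [Finset.mem_filter, Finset.mem_univ, true_and] at hH
    rw [one_pow, mul_one, T_pow, Finset.card_sdiff_of_subset hH.1]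
    congr 1
    have := Finset.card_le_card hH.1
    push_cast [Nat.cast_sub this]
    ring

lemma geo (F J : Finset α) (h : F ⊆ J) :
    ∑ H ∈ Finset.univ.filter (fun H : Finset α => F ⊆ H ∧ H ⊆ J),
        (T ((H.card : ℤ) - F.card) : LaurentPolynomial ℤ)
      = (1 + T 1) ^ (J.card - F.card) := by
  rw [sum_T_card F J h, sum_pow_card, add_comm, Finset.card_sdiff_of_subset h]

lemma key (n : ℕ) (F G L : Finset (Fin n)) :
    ∑ J ∈ Finset.univ.filter (fun J : Finset (Fin n) => F ∪ G ⊆ J ∧ J ⊆ L),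
        (1 + T 1 : LaurentPolynomial ℤ) ^ (J.card - F.card) * (1 + T 1) ^ (J.card - G.card) *
          (LaurentPolynomial.C ((-1 : ℤ) ^ ((L \ J).card)) * T ((n : ℤ) - J.card))
      = ∑ K ∈ Finset.univ.filter (fun K : Finset (Fin n) => F ∪ G ⊆ K ∧ K ⊆ L),
        T ((n : ℤ) - K.card) * (1 + T 1) ^ (K.card - (F ∩ G).card) * T ((L.card : ℤ) - K.card) := by
  by_cases h : F ∪ G ⊆ L
  swap
  · rw [Finset.filter_false_of_mem, Finset.sum_empty, Finset.sum_empty]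
    exact fun J _ hJ => absurd (hJ.1.trans hJ.2) h
  set A := L \ (F ∪ G) with hA
  set m := (F ∪ G).card with hm
  set t := A.card with ht
  set p := (F ∩ G).card with hp
  have hFm : F.card ≤ m := Finset.card_le_card Finset.subset_union_left
  have hGm : G.card ≤ m := Finset.card_le_card Finset.subset_union_right
  have hpF : p ≤ F.card := Finset.card_le_card Finset.inter_subset_left
  have hsum : m + p = F.card + G.card := Finset.card_union_add_card_inter F G
  have hL : L.card = m + t := by
    have := Finset.card_le_card h
    rw [ht, hA, Finset.card_sdiff_of_subset h]; omega
  have reindex : ∀ f : Finset (Fin n) → LaurentPolynomial ℤ,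
      ∑ J ∈ Finset.univ.filter (fun J : Finset (Fin n) => F ∪ G ⊆ J ∧ J ⊆ L), f J
        = ∑ S ∈ A.powerset, f ((F ∪ G) ∪ S) := by
    intro f
    refine Finset.sum_nbij' (fun J => J \ (F ∪ G)) (fun S => (F ∪ G) ∪ S) ?_ ?_ ?_ ?_ ?_
    · intro J hJ
      simp only [Finset.mem_filter, Finset.mem_univ, true_and] at hJ
      exact Finset.mem_powerset.mpr (Finset.sdiff_subset_sdiff hJ.2 le_rfl)
    · intro S hS
      simp only [Finset.mem_powerset] at hS
      simp only [Finset.mem_filter, Finset.mem_univ, true_and]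
      exact ⟨Finset.subset_union_left,
        Finset.union_subset h (hS.trans Finset.sdiff_subset)⟩
    · intro J hJ
      simp only [Finset.mem_filter, Finset.mem_univ, true_and] at hJ
      exact Finset.union_sdiff_of_subset hJ.1
    · intro S hS
      simp only [Finset.mem_powerset] at hS
      exact Finset.union_sdiff_cancel_left (Finset.disjoint_sdiff.mono_right hS)
    · intro J hJ
      simp only [Finset.mem_filter, Finset.mem_univ, true_and] at hJ
      rw [Finset.union_sdiff_of_subset hJ.1]
  have hfacts : ∀ S ∈ A.powerset, ((F ∪ G) ∪ S).card = m + S.card ∧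
      L \ ((F ∪ G) ∪ S) = A \ S ∧ S.card ≤ t := by
    intro S hS
    rw [Finset.mem_powerset] at hS
    refine ⟨Finset.card_union_of_disjoint (Finset.disjoint_sdiff.mono_right hS), ?_,
      Finset.card_le_card hS⟩
    ext a
    simp only [hA, Finset.mem_sdiff, Finset.mem_union]
    tauto
  rw [reindex, reindex]
  have hT : (T (-1) : LaurentPolynomial ℤ) * T 1 = 1 := by
    rw [← T_add]; norm_num
  calc
    ∑ S ∈ A.powerset,
        (1 + T 1 : LaurentPolynomial ℤ) ^ (((F ∪ G) ∪ S).card - F.card) *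
          (1 + T 1) ^ (((F ∪ G) ∪ S).card - G.card) *
          (LaurentPolynomial.C ((-1 : ℤ) ^ ((L \ ((F ∪ G) ∪ S)).card)) *
            T ((n : ℤ) - ((F ∪ G) ∪ S).card))
      = ∑ S ∈ A.powerset,
        (T ((n : ℤ) - m) * (1 + T 1) ^ (m - p)) *
          ((T (-1) * (1 + T 1) ^ 2) ^ S.card * (-1 : LaurentPolynomial ℤ) ^ (t - S.card)) := by
        refine Finset.sum_congr rfl fun S hS => ?_
        obtain ⟨hc, hsd, hst⟩ := hfacts S hS
        have hSA := Finset.mem_powerset.mp hS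
        rw [hc, hsd, Finset.card_sdiff_of_subset hSA, ← ht]
        have e1 : ((1 + T 1 : LaurentPolynomial ℤ)) ^ ((m + S.card) - F.card) *
            (1 + T 1) ^ ((m + S.card) - G.card)
            = (1 + T 1) ^ (m - p) * ((1 + T 1) ^ 2) ^ S.card := by
          rw [← pow_mul, ← pow_add, ← pow_add]; congr 1; omega
        have e2 : (T ((n : ℤ) - ((m + S.card : ℕ) : ℤ)) : LaurentPolynomial ℤ)
            = T ((n : ℤ) - m) * (T (-1)) ^ S.card := by
          rw [T_pow, ← T_add]; congr 1; push_cast; ring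
        rw [e1, e2]
        simp only [map_pow, map_neg, map_one, mul_pow]
        ring
    _ = (T ((n : ℤ) - m) * (1 + T 1) ^ (m - p)) *
        ((T (-1) * (1 + T 1) ^ 2 + (-1)) ^ t) := by
        rw [← Finset.mul_sum, sum_pow_card]
    _ = (T ((n : ℤ) - m) * (1 + T 1) ^ (m - p)) *
        ((T (-1) * (1 + T 1) + T 1) ^ t) := by
        congr 2
        linear_combination (1 + (T 1 : LaurentPolynomial ℤ)) * hT
    _ = ∑ S ∈ A.powerset,
        (T ((n : ℤ) - m) * (1 + T 1) ^ (m - p)) *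
          ((T (-1) * (1 + T 1)) ^ S.card * (T 1 : LaurentPolynomial ℤ) ^ (t - S.card)) := by
        rw [← Finset.mul_sum, sum_pow_card]
    _ = ∑ S ∈ A.powerset,
        T ((n : ℤ) - ((F ∪ G) ∪ S).card) * (1 + T 1) ^ (((F ∪ G) ∪ S).card - p) *
          T ((L.card : ℤ) - ((F ∪ G) ∪ S).card) := by
        refine Finset.sum_congr rfl fun S hS => ?_
        obtain ⟨hc, hsd, hst⟩ := hfacts S hS
        rw [hc]
        have e2 : (T ((n : ℤ) - ((m + S.card : ℕ) : ℤ)) : LaurentPolynomial ℤ)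
            = T ((n : ℤ) - m) * (T (-1)) ^ S.card := by
          rw [T_pow, ← T_add]; congr 1; push_cast; ring
        have e3 : (T ((L.card : ℤ) - ((m + S.card : ℕ) : ℤ)) : LaurentPolynomial ℤ)
            = (T 1) ^ (t - S.card) := by
          rw [T_pow]
          congr 1
          push_cast [hL, Nat.cast_sub hst]
          ring
        have e4 : ((1 + T 1 : LaurentPolynomial ℤ)) ^ ((m + S.card) - p)
            = (1 + T 1) ^ (m - p) * (1 + T 1) ^ S.card := by
          rw [← pow_add]; congr 1; omega
        rw [e2, e3, e4, mul_pow]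
        ring

lemma geo' {n : ℕ} (F J : Finset (Fin n)) :
    ∑ H : Finset (Fin n), (if H ⊆ J then BooleanMoebius.x n F H else 0)
      = if F ⊆ J then (1 + T 1 : LaurentPolynomial ℤ) ^ (J.card - F.card) else 0 := by
  have h1 : ∀ H : Finset (Fin n), (if H ⊆ J then BooleanMoebius.x n F H else 0)
      = if F ⊆ H ∧ H ⊆ J then (T ((H.card : ℤ) - F.card) : LaurentPolynomial ℤ) else 0 := by
    intro H
    unfold BooleanMoebius.x
    split_ifs with h1 h2 h3 <;> first | rfl | tauto
  rw [Finset.sum_congr rfl fun H _ => h1 H, ← Finset.sum_filter]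
  by_cases h : F ⊆ J
  · rw [geo F J h, if_pos h]
  · rw [if_neg h, Finset.filter_false_of_mem, Finset.sum_empty]
    exact fun H _ hh => h (hh.1.trans hh.2)

end BKL

/-- In the `q`-deformed Möbius algebra of the Boolean matroid on
`{1, …, n}`, the Kazhdan–Lusztig basis elements multiply as
`x_F · x_G = ∑_{K ⊇ F ∪ G} q^(n - |K|) (1 + q)^(|K| - |F ∩ G|) x_K`. -/
theorem boolean_kl_basis_product (n : ℕ) (F G : Finset (Fin n)) :
    BooleanMoebius.mul n (BooleanMoebius.x n F) (BooleanMoebius.x n G) =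
      ∑ K ∈ Finset.univ.filter (fun K : Finset (Fin n) => F ∪ G ⊆ K),
        (((T ((n : ℤ) - K.card) : LaurentPolynomial ℤ) *
          (1 + (T 1 : LaurentPolynomial ℤ)) ^ (K.card - (F ∩ G).card)) :
            LaurentPolynomial ℤ) •
          BooleanMoebius.x n K := by
  classical
  funext L
  have hR : (∑ K ∈ Finset.univ.filter (fun K : Finset (Fin n) => F ∪ G ⊆ K),
        (((T ((n : ℤ) - K.card) : LaurentPolynomial ℤ) *
          (1 + (T 1 : LaurentPolynomial ℤ)) ^ (K.card - (F ∩ G).card)) :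
            LaurentPolynomial ℤ) • BooleanMoebius.x n K) L
      = ∑ K ∈ Finset.univ.filter (fun K : Finset (Fin n) => F ∪ G ⊆ K ∧ K ⊆ L),
          T ((n : ℤ) - K.card) * (1 + T 1) ^ (K.card - (F ∩ G).card) *
            T ((L.card : ℤ) - K.card) := by
    rw [Finset.sum_apply, Finset.sum_filter, Finset.sum_filter]
    refine Finset.sum_congr rfl fun K _ => ?_
    simp only [Pi.smul_apply, smul_eq_mul, BooleanMoebius.x]
    by_cases h1 : F ∪ G ⊆ K <;> by_cases h2 : K ⊆ L <;>
      simp only [h1, h2, if_true, if_false, true_and, and_false, mul_zero, if_pos, if_neg,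
        not_false_iff, and_true] <;> ring
  rw [hR]
  -- now the LHS
  show (∑ H : Finset (Fin n), ∑ I : Finset (Fin n),
      BooleanMoebius.x n F H * BooleanMoebius.x n G I *
        ∑ J ∈ Finset.univ.filter (fun J : Finset (Fin n) => H ∪ I ⊆ J ∧ J ⊆ L),
          LaurentPolynomial.C ((-1 : ℤ) ^ ((L \ J).card)) * T ((n : ℤ) - J.card)) = _
  have step1 : ∀ H I : Finset (Fin n),
      BooleanMoebius.x n F H * BooleanMoebius.x n G I *
        (∑ J ∈ Finset.univ.filter (fun J : Finset (Fin n) => H ∪ I ⊆ J ∧ J ⊆ L),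
          LaurentPolynomial.C ((-1 : ℤ) ^ ((L \ J).card)) * T ((n : ℤ) - J.card))
      = ∑ J ∈ Finset.univ.filter (fun J : Finset (Fin n) => J ⊆ L),
          (if H ⊆ J then BooleanMoebius.x n F H else 0) *
          (if I ⊆ J then BooleanMoebius.x n G I else 0) *
          (LaurentPolynomial.C ((-1 : ℤ) ^ ((L \ J).card)) * T ((n : ℤ) - J.card)) := by
    intro H I
    rw [Finset.mul_sum, Finset.sum_filter, Finset.sum_filter]
    refine Finset.sum_congr rfl fun J _ => ?_
    by_cases h1 : J ⊆ L <;> by_cases h2 : H ⊆ J <;> by_cases h3 : I ⊆ J <;>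
      simp [h1, h2, h3, Finset.union_subset_iff] <;> ring
  calc
    ∑ H : Finset (Fin n), ∑ I : Finset (Fin n),
        BooleanMoebius.x n F H * BooleanMoebius.x n G I *
        ∑ J ∈ Finset.univ.filter (fun J : Finset (Fin n) => H ∪ I ⊆ J ∧ J ⊆ L),
          LaurentPolynomial.C ((-1 : ℤ) ^ ((L \ J).card)) * T ((n : ℤ) - J.card)
      = ∑ H : Finset (Fin n), ∑ I : Finset (Fin n),
          ∑ J ∈ Finset.univ.filter (fun J : Finset (Fin n) => J ⊆ L),
          (if H ⊆ J then BooleanMoebius.x n F H else 0) *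
          (if I ⊆ J then BooleanMoebius.x n G I else 0) *
          (LaurentPolynomial.C ((-1 : ℤ) ^ ((L \ J).card)) * T ((n : ℤ) - J.card)) := by
        exact Finset.sum_congr rfl fun H _ => Finset.sum_congr rfl fun I _ => step1 H I
    _ = ∑ J ∈ Finset.univ.filter (fun J : Finset (Fin n) => J ⊆ L),
          ∑ H : Finset (Fin n), ∑ I : Finset (Fin n),
          (if H ⊆ J then BooleanMoebius.x n F H else 0) *
          (if I ⊆ J then BooleanMoebius.x n G I else 0) *
          (LaurentPolynomial.C ((-1 : ℤ) ^ ((L \ J).card)) * T ((n : ℤ) - J.card)) := by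
        rw [Finset.sum_congr rfl fun H (_ : H ∈ Finset.univ) => Finset.sum_comm]
        exact Finset.sum_comm
    _ = ∑ J ∈ Finset.univ.filter (fun J : Finset (Fin n) => J ⊆ L),
          (if F ⊆ J then (1 + T 1 : LaurentPolynomial ℤ) ^ (J.card - F.card) else 0) *
          (if G ⊆ J then (1 + T 1 : LaurentPolynomial ℤ) ^ (J.card - G.card) else 0) *
          (LaurentPolynomial.C ((-1 : ℤ) ^ ((L \ J).card)) * T ((n : ℤ) - J.card)) := by
        refine Finset.sum_congr rfl fun J _ => ?_
        rw [← BKL.geo' F J, ← BKL.geo' G J, Finset.sum_mul_sum, Finset.sum_mul]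
        exact Finset.sum_congr rfl fun H _ => by rw [Finset.sum_mul]
    _ = ∑ J ∈ Finset.univ.filter (fun J : Finset (Fin n) => F ∪ G ⊆ J ∧ J ⊆ L),
          (1 + T 1 : LaurentPolynomial ℤ) ^ (J.card - F.card) *
          (1 + T 1) ^ (J.card - G.card) *
          (LaurentPolynomial.C ((-1 : ℤ) ^ ((L \ J).card)) * T ((n : ℤ) - J.card)) := by
        rw [Finset.sum_filter, Finset.sum_filter]
        refine Finset.sum_congr rfl fun J _ => ?_
        by_cases h1 : J ⊆ L <;> by_cases h2 : F ⊆ J <;> by_cases h3 : G ⊆ J <;>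
          simp [h1, h2, h3, Finset.union_subset_iff] <;> ring
    _ = _ := BKL.key n F G L
end
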